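/- arXiv:2201.02970 — 8 statements merged into one kernel-verified Lean document; each statement's English description precedes it below -/
import Mathlib

section
/- Let Y be a random variable with values in {0,1}^N and let X = X(Y) be a nonnegative function of complexity at most d. For every positive integer ℓ and all positive reals ε, δ with ε < 1+δ, P(X ≥ (1+δ)E[X] and Y ∉ F for all F ∈ 𝓕) ≤ ((1+δ−ε)/(1+δ))^ℓ, where 𝓕 is the collection of all subcubes F of codimension at most dℓ with E[X | Y ∈ F] ≥ (1+δ−ε)E[X]. -/
/-!
Let `ρ = (1 + δ - ε) E[X]` and let `B` be the event in question, so that every subcube of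
codimension at most `dℓ` meeting `B` satisfies `E[X 1_C] ≤ ρ P(C)`. By induction on `k`,
`E[X^k 1_{B ∩ C}] ≤ ρ^k P(C)` for every subcube `C` of codimension at most `d(ℓ - k)`: writing one
factor `X` as `∑ α_j 1_{C_j}` splits the left side into pieces over the subcubes `C ∩ C_j`, of
codimension at most `d(ℓ - k + 1)`, and the induction hypothesis bounds their sum by
`ρ^(k-1) ∑ α_j P(C ∩ C_j) = ρ^(k-1) E[X 1_C] ≤ ρ^k P(C)`. For `k = ℓ` and `C` the whole cube,
Markov's inequality for `X^ℓ` gives `((1 + δ) E[X])^ℓ P(B) ≤ ρ^ℓ`.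
-/

open MeasureTheory Finset

lemma setIntegral_le_mul_measureReal_of_div_lt {Ω : Type*} [MeasurableSpace Ω] {ν : Measure Ω}
    [IsFiniteMeasure ν] {s : Set Ω} {f : Ω → ℝ} {r : ℝ}
    (h : (∫ x in s, f x ∂ν) / ν.real s < r) : ∫ x in s, f x ∂ν ≤ r * ν.real s := by
  rcases measureReal_nonneg.lt_or_eq with hpos | hzero
  · exact ((div_lt_iff₀ hpos).1 h).le
  · rw [← hzero, mul_zero, setIntegral_measure_zero _ ((measureReal_eq_zero_iff).1 hzero.symm)]

section Subcubes

variable {ι β : Type*}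

def subcube (K : Finset ι) (b : ι → β) : Set (ι → β) := {y | ∀ i ∈ K, y i = b i}

@[simp]
lemma subcube_empty (b : ι → β) : subcube ∅ b = Set.univ := by
  simp [subcube]

lemma subcube_inter_subcube [DecidableEq ι] {K J : Finset ι} {b c z : ι → β}
    (hz : z ∈ subcube K b ∩ subcube J c) : subcube K b ∩ subcube J c = subcube (K ∪ J) z := by
  obtain ⟨hzK, hzJ⟩ := hz
  ext y
  simp only [subcube, Set.mem_inter_iff, Set.mem_ofPred_eq, mem_union] at hzK hzJ ⊢
  constructor
  · rintro ⟨hyK, hyJ⟩ i (hi | hi)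
    · rw [hyK i hi, hzK i hi]
    · rw [hyJ i hi, hzJ i hi]
  · intro hy
    exact ⟨fun i hi => (hy i (.inl hi)).trans (hzK i hi),
      fun i hi => (hy i (.inr hi)).trans (hzJ i hi)⟩

variable [Finite ι] [Finite β] [MeasurableSpace β] [MeasurableSingletonClass β]
  {ν : Measure (ι → β)} {κ : Type*} [Fintype κ] {α : κ → ℝ} {J : κ → Finset ι}
  {c : κ → ι → β} {X : (ι → β) → ℝ}

lemma setIntegral_mul_eq_sum_inter_subcube [IsFiniteMeasure ν]
    (hX : ∀ y, X y = ∑ j, α j * (subcube (J j) (c j)).indicator 1 y)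
    (S : Set (ι → β)) (g : (ι → β) → ℝ) :
    ∫ y in S, g y * X y ∂ν = ∑ j, α j * ∫ y in S ∩ subcube (J j) (c j), g y ∂ν := by
  simp_rw [hX, mul_sum]
  rw [integral_finsetSum _ fun j _ => Integrable.of_finite]
  refine sum_congr rfl fun j _ => ?_
  rw [← setIntegral_indicator .of_discrete, ← integral_const_mul]
  congr 1 with y
  by_cases hy : y ∈ subcube (J j) (c j) <;> simp [hy, mul_comm]

lemma setIntegral_inter_subcube_pow_le [IsFiniteMeasure ν] {d : ℕ} (hα : ∀ j, 0 ≤ α j)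
    (hJ : ∀ j, #(J j) ≤ d) (hX : ∀ y, X y = ∑ j, α j * (subcube (J j) (c j)).indicator 1 y)
    {B : Set (ι → β)} {ρ : ℝ} {D : ℕ} (hρ : 0 ≤ ρ)
    (hB : ∀ K b, #K ≤ D → (B ∩ subcube K b).Nonempty →
      ∫ y in subcube K b, X y ∂ν ≤ ρ * ν.real (subcube K b))
    (k : ℕ) {K : Finset ι} (b : ι → β) (hK : #K + d * k ≤ D) :
    ∫ y in B ∩ subcube K b, X y ^ k ∂ν ≤ ρ ^ k * ν.real (subcube K b) := by
  classical
  induction k generalizing K b with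
  | zero =>
    simpa using measureReal_mono Set.inter_subset_right
  | succ k ih =>
    rcases (B ∩ subcube K b).eq_empty_or_nonempty with hempty | hmeet
    · rw [hempty, Measure.restrict_empty, integral_zero_measure]
      positivity
    have hterm : ∀ j, α j * ∫ y in B ∩ subcube K b ∩ subcube (J j) (c j), X y ^ k ∂ν
        ≤ α j * (ρ ^ k * ∫ _ in subcube K b ∩ subcube (J j) (c j), 1 ∂ν) := by
      intro j
      refine mul_le_mul_of_nonneg_left ?_ (hα j)
      rcases (subcube K b ∩ subcube (J j) (c j)).eq_empty_or_nonempty with h | ⟨z, hz⟩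
      · simp [Set.inter_assoc, h]
      · rw [Set.inter_assoc, subcube_inter_subcube hz, setIntegral_const, smul_eq_mul, mul_one]
        refine ih z ?_
        have := card_union_le K (J j)
        have := hJ j
        rw [mul_add_one] at hK
        omega
    calc ∫ y in B ∩ subcube K b, X y ^ (k + 1) ∂ν
        = ∑ j, α j * ∫ y in B ∩ subcube K b ∩ subcube (J j) (c j), X y ^ k ∂ν := by
          simp_rw [pow_succ]
          exact setIntegral_mul_eq_sum_inter_subcube hX _ _
      _ ≤ ∑ j, α j * (ρ ^ k * ∫ _ in subcube K b ∩ subcube (J j) (c j), 1 ∂ν) :=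
          sum_le_sum fun j _ => hterm j
      _ = ρ ^ k * ∫ y in subcube K b, 1 * X y ∂ν := by
          rw [setIntegral_mul_eq_sum_inter_subcube hX, mul_sum]
          exact sum_congr rfl fun j _ => by ring
      _ ≤ ρ ^ k * (ρ * ν.real (subcube K b)) := by
          simp only [one_mul]
          gcongr
          exact hB K b (by omega) hmeet
      _ = ρ ^ (k + 1) * ν.real (subcube K b) := by ring

lemma measureReal_le_div_pow_of_setIntegral_subcube_le [IsProbabilityMeasure ν] {d ℓ : ℕ}
    (hα : ∀ j, 0 ≤ α j) (hJ : ∀ j, #(J j) ≤ d)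
    (hX : ∀ y, X y = ∑ j, α j * (subcube (J j) (c j)).indicator 1 y)
    {B : Set (ι → β)} {ρ a : ℝ} (hρ : 0 ≤ ρ) (ha : 0 < a) (hB_large : ∀ y ∈ B, a ≤ X y)
    (hB : ∀ K b, #K ≤ d * ℓ → (B ∩ subcube K b).Nonempty →
      ∫ y in subcube K b, X y ∂ν ≤ ρ * ν.real (subcube K b)) :
    ν.real B ≤ (ρ / a) ^ ℓ := by
  rcases B.eq_empty_or_nonempty with rfl | ⟨y₀, -⟩
  · simp only [measureReal_empty]
    positivity
  have hmoment : a ^ ℓ * ν.real B ≤ ∫ y in B, X y ^ ℓ ∂ν :=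
    setIntegral_ge_of_const_le_real .of_discrete (measure_ne_top _ _)
      (fun y hy => pow_le_pow_left₀ ha.le (hB_large y hy) ℓ) Integrable.of_finite.integrableOn
  have htail := setIntegral_inter_subcube_pow_le hα hJ hX hρ hB ℓ (K := ∅) y₀ (by simp)
  rw [subcube_empty, Set.inter_univ, probReal_univ, mul_one] at htail
  rw [div_pow, le_div_iff₀ (by positivity)]
  linarith

theorem measureReal_le_of_avoids_heavy_subcubes [IsProbabilityMeasure ν] {d ℓ : ℕ}
    (hα : ∀ j, 0 ≤ α j) (hJ : ∀ j, #(J j) ≤ d)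
    (hX : ∀ y, X y = ∑ j, α j * (subcube (J j) (c j)).indicator 1 y)
    {ε δ : ℝ} (hδ : 0 < 1 + δ) (hεδ : ε ≤ 1 + δ) {B : Set (ι → β)}
    (hB_large : ∀ y ∈ B, (1 + δ) * ∫ y, X y ∂ν ≤ X y)
    (hB_avoid : ∀ y ∈ B, ∀ K b, #K ≤ d * ℓ →
      (1 + δ - ε) * ∫ y, X y ∂ν ≤ (∫ y in subcube K b, X y ∂ν) / ν.real (subcube K b) →
      y ∉ subcube K b) :
    ν.real B ≤ ((1 + δ - ε) / (1 + δ)) ^ ℓ := by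
  rcases B.eq_empty_or_nonempty with rfl | ⟨y₀, hy₀⟩
  · simp only [measureReal_empty]
    exact pow_nonneg (div_nonneg (by linarith) hδ.le) ℓ
  set M := ∫ y, X y ∂ν
  have hX_nonneg : ∀ y, 0 ≤ X y := fun y => by
    rw [hX y]
    exact sum_nonneg fun j _ =>
      mul_nonneg (hα j) (Set.indicator_nonneg (fun _ _ => zero_le_one) y)
  -- `y₀ ∈ B`, so the whole cube is not heavy; for `M = 0` it would be
  have hM : 0 < M := by
    refine (integral_nonneg hX_nonneg).lt_of_ne' fun hM => ?_
    exact hB_avoid y₀ hy₀ ∅ y₀ (by simp) (by simp [M, hM]) (by simp)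
  have hlight : ∀ K b, #K ≤ d * ℓ → (B ∩ subcube K b).Nonempty →
      ∫ y in subcube K b, X y ∂ν ≤ (1 + δ - ε) * M * ν.real (subcube K b) :=
    fun K b hK ⟨y, hyB, hyC⟩ => setIntegral_le_mul_measureReal_of_div_lt
      (not_le.1 fun h => hB_avoid y hyB K b hK h hyC)
  calc ν.real B ≤ ((1 + δ - ε) * M / ((1 + δ) * M)) ^ ℓ :=
        measureReal_le_div_pow_of_setIntegral_subcube_le hα hJ hX
          (mul_nonneg (by linarith) hM.le) (mul_pos hδ hM) hB_large hlight
    _ = ((1 + δ - ε) / (1 + δ)) ^ ℓ := by rw [mul_div_mul_right _ _ hM.ne']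

end Subcubes

theorem stmt_2_general {Ω : Type*} [MeasurableSpace Ω] (μ : Measure Ω) [IsProbabilityMeasure μ]
    {N : ℕ} (Y : Ω → (Fin N → Bool)) (hY : Measurable Y)
    (X : (Fin N → Bool) → ℝ) (d ℓ : ℕ)
    (hcomp : ∃ (m : ℕ) (α : Fin m → ℝ) (J : Fin m → Finset (Fin N))
        (c : Fin m → (Fin N → Bool)),
      (∀ j, 0 ≤ α j) ∧ (∀ j, (J j).card ≤ d) ∧
      ∀ y, X y = ∑ j, α j * (if ∀ n ∈ J j, y n = c j n then (1 : ℝ) else 0))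
    (ε δ : ℝ) (hδ : 0 < δ) (hεδ : ε < 1 + δ) :
    (μ {ω | X (Y ω) ≥ (1 + δ) * ∫ ω', X (Y ω') ∂μ ∧
        ∀ F : Set (Fin N → Bool),
          (∃ (J : Finset (Fin N)) (c : Fin N → Bool),
            F = {y | ∀ n ∈ J, y n = c n} ∧ J.card ≤ d * ℓ ∧
            (∫ ω' in Y ⁻¹' F, X (Y ω') ∂μ) / (μ (Y ⁻¹' F)).toReal
              ≥ (1 + δ - ε) * ∫ ω', X (Y ω') ∂μ) → Y ω ∉ F}).toReal
      ≤ ((1 + δ - ε) / (1 + δ)) ^ ℓ := by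
  obtain ⟨m, α, J, c, hα, hJ, hX⟩ := hcomp
  have hX' : ∀ y, X y = ∑ j, α j * (subcube (J j) (c j)).indicator 1 y := fun y => by
    simp [hX y, Set.indicator_apply, subcube]
  have hmeas : ∀ F, (μ (Y ⁻¹' F)).toReal = (μ.map Y).real F := fun F => by
    rw [measureReal_def, Measure.map_apply hY .of_discrete]
  have hsetInt : ∀ F, ∫ ω in Y ⁻¹' F, X (Y ω) ∂μ = ∫ y in F, X y ∂μ.map Y := fun F =>
    (setIntegral_map .of_discrete Measurable.of_discrete.aestronglyMeasurable hY.aemeasurable).symm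
  have hInt : ∫ ω, X (Y ω) ∂μ = ∫ y, X y ∂μ.map Y :=
    (integral_map hY.aemeasurable Measurable.of_discrete.aestronglyMeasurable).symm
  refine (ENNReal.toReal_mono (measure_ne_top _ _)
    (Measure.le_map_apply_image hY.aemeasurable _)).trans ?_
  have := Measure.isProbabilityMeasure_map (μ := μ) hY.aemeasurable
  refine measureReal_le_of_avoids_heavy_subcubes hα hJ hX' (by linarith) hεδ.le ?_ ?_
  · rintro _ ⟨ω, hω, rfl⟩
    exact hInt ▸ hω.1
  · rintro _ ⟨ω, hω, rfl⟩ K b hK hheavy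
    refine hω.2 _ ⟨K, b, rfl, hK, ?_⟩
    rwa [hsetInt, hmeas, hInt]

/-- Lemma 2.4. If X ≥ 0 has complexity at most d, then the probability
that X ≥ (1+δ)E[X] while Y avoids every subcube F of codimension ≤ dℓ with
E[X | Y ∈ F] ≥ (1+δ-ε)E[X] is at most ((1+δ-ε)/(1+δ))^ℓ. -/
theorem stmt_2 {Ω : Type*} [MeasurableSpace Ω] (μ : Measure Ω) [IsProbabilityMeasure μ]
    {N : ℕ} (Y : Ω → (Fin N → Bool)) (hY : Measurable Y)
    (X : (Fin N → Bool) → ℝ) (d ℓ : ℕ) (hℓ : 0 < ℓ)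
    (hcomp : ∃ (m : ℕ) (α : Fin m → ℝ) (J : Fin m → Finset (Fin N))
        (c : Fin m → (Fin N → Bool)),
      (∀ j, 0 ≤ α j) ∧ (∀ j, (J j).card ≤ d) ∧
      ∀ y, X y = ∑ j, α j * (if ∀ n ∈ J j, y n = c j n then (1 : ℝ) else 0))
    (ε δ : ℝ) (hε : 0 < ε) (hδ : 0 < δ) (hεδ : ε < 1 + δ) :
    (μ {ω | X (Y ω) ≥ (1 + δ) * ∫ ω', X (Y ω') ∂μ ∧
        ∀ F : Set (Fin N → Bool),
          (∃ (J : Finset (Fin N)) (c : Fin N → Bool),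
            F = {y | ∀ n ∈ J, y n = c n} ∧ J.card ≤ d * ℓ ∧
            (∫ ω' in Y ⁻¹' F, X (Y ω') ∂μ) / (μ (Y ⁻¹' F)).toReal
              ≥ (1 + δ - ε) * ∫ ω', X (Y ω') ∂μ) → Y ω ∉ F}).toReal
      ≤ ((1 + δ - ε) / (1 + δ)) ^ ℓ :=
  stmt_2_general μ Y hY X d ℓ hcomp ε δ hδ hεδ
end

section
/- Let G be a graph with n vertices, m > 3 edges, and minimum degree at least 2. Then the number of induced copies of the 4-cycle C_4 in G is at most m(m − n + 1)/4. -/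
/-!
Fix an edge `ab` and let `U = N(a) ∪ N(b)`. The pairs `(c, d)` completing `a-b-c-d-a` to an
induced `C₄` give distinct edges `cd` with both ends in `U \ {a, b}`. Disjoint from these are the
`deg a + deg b - 1 ≥ |U| - 1` edges at `a` or `b`, and the edges meeting `V \ U`, of which there
are at least `|V \ U|` since all degrees are at least 2. So each of the `2m` ordered edges `(a, b)`
has at most `m - n + 1` completions.
-/

open Finset

namespace SimpleGraph

variable {V : Type*} [Fintype V] [DecidableEq V] (G : SimpleGraph V) [DecidableRel G.Adj]

lemma mk_notMem_biUnion_incidenceFinset {S : Finset V} {c d : V} (hc : c ∉ S) (hd : d ∉ S) :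
    s(c, d) ∉ S.biUnion fun v => G.incidenceFinset v := by
  simp only [mem_biUnion, mem_incidenceFinset, not_exists, not_and]
  rintro v hv ⟨-, hve⟩
  rcases Sym2.mem_iff.1 hve with rfl | rfl
  exacts [hc hv, hd hv]

lemma disjoint_biUnion_incidenceFinset {S T : Finset V} (hST : Disjoint S T)
    (hadj : ∀ v ∈ S, ∀ w ∈ T, ¬G.Adj v w) :
    Disjoint (S.biUnion fun v => G.incidenceFinset v) (T.biUnion fun v => G.incidenceFinset v) := by
  simp only [disjoint_biUnion_left, disjoint_biUnion_right]
  intro w hw v hv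
  refine Finset.disjoint_left.2 fun e hev hew => ?_
  exact hadj v hv w hw <| G.adj_of_mem_incidenceSet (disjoint_iff_ne.1 hST v hv w hw)
    ((G.mem_incidenceFinset v e).1 hev) ((G.mem_incidenceFinset w e).1 hew)

lemma card_mul_le_card_biUnion_incidenceFinset_mul {S : Finset V} {k : ℕ}
    (hS : ∀ v ∈ S, k ≤ G.degree v) : #S * k ≤ #(S.biUnion fun v => G.incidenceFinset v) * 2 := by
  refine card_mul_le_card_mul (fun v e => v ∈ e) (fun v hv => ?_) (fun e _ => ?_)
  · calc k ≤ #(G.incidenceFinset v) := (G.card_incidenceFinset_eq_degree v).symm ▸ hS v hv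
      _ ≤ _ := card_le_card fun e he => mem_bipartiteAbove _ |>.2
            ⟨mem_biUnion.2 ⟨v, hv, he⟩, ((G.mem_incidenceFinset v e).1 he).2⟩
  · calc #(S.bipartiteBelow _ e) ≤ #e.toFinset :=
          card_le_card fun v hv => Sym2.mem_toFinset.2 (mem_bipartiteBelow _ |>.1 hv).2
      _ ≤ 2 := by rw [Sym2.card_toFinset]; split_ifs <;> norm_num

lemma card_incidenceFinset_union_add_one {a b : V} (hab : G.Adj a b) :
    #(G.incidenceFinset a ∪ G.incidenceFinset b) + 1 = G.degree a + G.degree b := by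
  have hinter : G.incidenceFinset a ∩ G.incidenceFinset b = {s(a, b)} := by
    apply coe_injective
    rw [coe_inter, coe_incidenceFinset, coe_incidenceFinset, coe_singleton]
    exact G.incidenceSet_inter_incidenceSet_of_adj hab
  rw [← card_incidenceFinset_eq_degree, ← card_incidenceFinset_eq_degree,
    ← card_union_add_card_inter, hinter, card_singleton]

def inducedC4Completions (a b : V) : Finset (V × V) :=
  {cd | G.Adj b cd.1 ∧ G.Adj cd.1 cd.2 ∧ G.Adj cd.2 a ∧ a ≠ cd.1 ∧ b ≠ cd.2 ∧
    ¬ G.Adj a cd.1 ∧ ¬ G.Adj b cd.2}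

lemma mem_inducedC4Completions {a b : V} {cd : V × V} :
    cd ∈ G.inducedC4Completions a b ↔ G.Adj b cd.1 ∧ G.Adj cd.1 cd.2 ∧ G.Adj cd.2 a ∧
      a ≠ cd.1 ∧ b ≠ cd.2 ∧ ¬ G.Adj a cd.1 ∧ ¬ G.Adj b cd.2 := by
  simp [inducedC4Completions]

lemma card_image_mk_inducedC4Completions (a b : V) :
    #((G.inducedC4Completions a b).image fun cd => s(cd.1, cd.2)) =
      #(G.inducedC4Completions a b) := by
  refine card_image_of_injOn fun cd hcd cd' hcd' hcd_eq => ?_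
  rw [mem_coe, mem_inducedC4Completions] at hcd hcd'
  rcases Sym2.eq_iff.1 hcd_eq with ⟨h₁, h₂⟩ | ⟨-, h₂⟩
  · exact Prod.ext h₁ h₂
  · exact absurd (h₂ ▸ hcd'.1) hcd.2.2.2.2.2.2

lemma card_inducedC4Completions_add_card_le (hdeg : ∀ v, 2 ≤ G.degree v) {a b : V}
    (hab : G.Adj a b) : #(G.inducedC4Completions a b) + Fintype.card V ≤ #G.edgeFinset + 1 := by
  set U := G.neighborFinset a ∪ G.neighborFinset b
  have hab_mem : ∀ v ∈ ({a, b} : Finset V), v ∈ U := by simp [U, hab, hab.symm]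
  have hnbr_mem : ∀ v ∈ ({a, b} : Finset V), ∀ w, G.Adj v w → w ∈ U := by
    simp +contextual [U]
  set E₁ := ({a, b} : Finset V).biUnion fun v => G.incidenceFinset v
  set E₂ := Uᶜ.biUnion fun v => G.incidenceFinset v
  set E₃ := (G.inducedC4Completions a b).image fun cd => s(cd.1, cd.2)
  have hE₁ : #U ≤ #E₁ + 1 := by
    simp only [E₁, biUnion_insert, singleton_biUnion]
    rw [G.card_incidenceFinset_union_add_one hab,
      ← card_neighborFinset_eq_degree, ← card_neighborFinset_eq_degree]
    exact card_union_le _ _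
  have hE₂ : #Uᶜ ≤ #E₂ := by
    have := G.card_mul_le_card_biUnion_incidenceFinset_mul (S := Uᶜ) fun v _ => hdeg v
    change _ * 2 ≤ #E₂ * 2 at this
    omega
  have h₁₂ : Disjoint E₁ E₂ := by
    refine G.disjoint_biUnion_incidenceFinset ?_ fun v hv w hw hvw => ?_
    · exact Finset.disjoint_left.2 fun v hv hv' => mem_compl.1 hv' (hab_mem v hv)
    · exact mem_compl.1 hw (hnbr_mem v hv w hvw)
  have h₃ : Disjoint (E₁ ∪ E₂) E₃ := by
    rw [← union_biUnion, Finset.disjoint_right]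
    intro e he
    obtain ⟨cd, hcd, rfl⟩ := mem_image.1 he
    obtain ⟨hbc, -, hda, hac, hbd, -, -⟩ := G.mem_inducedC4Completions.1 hcd
    apply G.mk_notMem_biUnion_incidenceFinset
    · simp [U, hbc, hbc.ne', Ne.symm hac]
    · simp [U, hda.symm, hda.ne, Ne.symm hbd]
  have hsub : E₁ ∪ E₂ ∪ E₃ ⊆ G.edgeFinset :=
    union_subset (union_subset (biUnion_subset.2 fun v _ => G.incidenceFinset_subset v)
      (biUnion_subset.2 fun v _ => G.incidenceFinset_subset v))
      (image_subset_iff.2 fun cd hcd => mem_edgeFinset.2 (G.mem_inducedC4Completions.1 hcd).2.1)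
  have := card_le_card hsub
  rw [card_union_of_disjoint h₃, card_union_of_disjoint h₁₂,
    G.card_image_mk_inducedC4Completions] at this
  have := card_add_card_compl U
  omega

lemma natCard_inducedC4_eq_sum_card_inducedC4Completions :
    Nat.card {q : V × V × V × V //
        G.Adj q.1 q.2.1 ∧ G.Adj q.2.1 q.2.2.1 ∧ G.Adj q.2.2.1 q.2.2.2 ∧
        G.Adj q.2.2.2 q.1 ∧ q.1 ≠ q.2.2.1 ∧ q.2.1 ≠ q.2.2.2 ∧
        ¬ G.Adj q.1 q.2.2.1 ∧ ¬ G.Adj q.2.1 q.2.2.2} =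
      ∑ p : V × V with G.Adj p.1 p.2, #(G.inducedC4Completions p.1 p.2) := by
  rw [Nat.card_eq_fintype_card, Fintype.card_subtype,
    card_eq_sum_card_fiberwise (f := fun q => (q.1, q.2.1))
      (t := {p : V × V | G.Adj p.1 p.2}) (fun q hq => by simp_all)]
  refine sum_congr rfl fun ⟨a, b⟩ hab => ?_
  refine card_nbij' (fun q => (q.2.2.1, q.2.2.2)) (fun cd => (a, b, cd.1, cd.2)) ?_ ?_ ?_ ?_
  · rintro ⟨a', b', c, d⟩ hq
    simp only [coe_filter, mem_filter, mem_univ, true_and, Set.mem_ofPred_eq, Prod.mk.injEq] at hq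
    obtain ⟨⟨-, hq⟩, rfl, rfl⟩ := hq
    exact G.mem_inducedC4Completions.2 hq
  · rintro ⟨c, d⟩ hcd
    simpa [(mem_filter.1 hab).2] using G.mem_inducedC4Completions.1 hcd
  · rintro ⟨a', b', c, d⟩ hq
    simp only [coe_filter, mem_filter, mem_univ, true_and, Set.mem_ofPred_eq, Prod.mk.injEq] at hq
    obtain ⟨-, rfl, rfl⟩ := hq
    rfl
  · exact fun _ _ => rfl

end SimpleGraph

theorem stmt_3_general {V : Type*} [Fintype V] (G : SimpleGraph V) (n m : ℕ)
    (hn : n = Fintype.card V) (hm : m = G.edgeSet.ncard)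
    (hmin : ∀ v : V, 2 ≤ (G.neighborSet v).ncard) :
    (Nat.card {q : V × V × V × V //
        G.Adj q.1 q.2.1 ∧ G.Adj q.2.1 q.2.2.1 ∧ G.Adj q.2.2.1 q.2.2.2 ∧
        G.Adj q.2.2.2 q.1 ∧ q.1 ≠ q.2.2.1 ∧ q.2.1 ≠ q.2.2.2 ∧
        ¬ G.Adj q.1 q.2.2.1 ∧ ¬ G.Adj q.2.1 q.2.2.2} : ℝ)
      ≤ 2 * m * ((m : ℝ) - n + 1) := by
  classical
  have hdeg : ∀ v, 2 ≤ G.degree v := fun v => by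
    have := hmin v
    rwa [Set.ncard_eq_toFinset_card'] at this
  have hm' : m = #G.edgeFinset := by rw [hm, ← G.coe_edgeFinset, Set.ncard_coe_finset]
  have hcard : #{p : V × V | G.Adj p.1 p.2} = 2 * m := by rw [hm', G.two_mul_card_edgeFinset]
  rw [G.natCard_inducedC4_eq_sum_card_inducedC4Completions]
  push_cast
  calc ∑ p : V × V with G.Adj p.1 p.2, (#(G.inducedC4Completions p.1 p.2) : ℝ)
      ≤ ∑ _p : V × V with G.Adj _p.1 _p.2, ((m : ℝ) - n + 1) := by
        refine sum_le_sum fun p hp => ?_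
        have := G.card_inducedC4Completions_add_card_le hdeg (mem_filter.1 hp).2
        rw [← hn, ← hm'] at this
        have : (#(G.inducedC4Completions p.1 p.2) : ℝ) + n ≤ m + 1 := by exact_mod_cast this
        linarith
    _ = 2 * m * ((m : ℝ) - n + 1) := by
        rw [sum_const, nsmul_eq_mul, hcard]
        push_cast
        ring

/-- Lemma 6.3. If G has n vertices, m > 3 edges and minimum degree at
least 2, then the number of induced copies of C₄ in G is at most m(m-n+1)/4.
We count ordered 4-tuples (a,b,c,d) inducing a 4-cycle a-b-c-d-a; each (unordered)
induced copy of C₄ corresponds to exactly 8 such tuples, so the bound reads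
(ordered count) ≤ 8·m(m-n+1)/4 = 2·m·(m-n+1). -/
theorem stmt_3 {V : Type*} [Fintype V] (G : SimpleGraph V) (n m : ℕ)
    (hn : n = Fintype.card V) (hm : m = G.edgeSet.ncard)
    (hm3 : 3 < m) (hmin : ∀ v : V, 2 ≤ (G.neighborSet v).ncard) :
    (Nat.card {q : V × V × V × V //
        G.Adj q.1 q.2.1 ∧ G.Adj q.2.1 q.2.2.1 ∧ G.Adj q.2.2.1 q.2.2.2 ∧
        G.Adj q.2.2.2 q.1 ∧ q.1 ≠ q.2.2.1 ∧ q.2.1 ≠ q.2.2.2 ∧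
        ¬ G.Adj q.1 q.2.2.1 ∧ ¬ G.Adj q.2.1 q.2.2.2} : ℝ)
      ≤ 2 * m * ((m : ℝ) - n + 1) :=
  stmt_3_general G n m hn hm hmin
end

section
/- For any graph G with n vertices and m edges (m ≤ C(n,2)), the number of induced copies of K_{1,2} ⊔ K_1 (a path with two edges plus an isolated vertex, as a 4-vertex induced subgraph) in G is at most m·n²/8. -/
/-!
Sort the ordered copies `(c, l₁, l₂, w)` by the edge `s(c, l₁)`. Within the fibre of an edge `e`,
the pair `(l₂, w)` determines the copy (the centre is the endpoint of `e` adjacent to `l₂`), and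
`l₂` lies in the neighbourhood `A` of `e` while `w` lies in its non-neighbourhood `B`. As `A` and
`B` are disjoint, the fibre has at most `|A| |B| ≤ n² / 4` elements; summing over the `m` edges
gives the bound.
-/

open Finset

theorem Finset.four_mul_card_mul_card_le_sq {α : Type*} [Fintype α] {s t : Finset α}
    (h : Disjoint s t) : 4 * #s * #t ≤ Fintype.card α ^ 2 := by
  classical
  calc 4 * #s * #t ≤ (#s + #t) ^ 2 := four_mul_le_sq_add _ _
    _ = #(s ∪ t) ^ 2 := by rw [card_union_of_disjoint h]
    _ ≤ Fintype.card α ^ 2 := by gcongr; exact card_le_univ _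

namespace SimpleGraph

variable {V : Type*} (G : SimpleGraph V)

/-- `(c, l₁, l₂, w)` spans an induced `K_{1,2} ⊔ K₁` with centre `c`, leaves `l₁, l₂` and
isolated vertex `w`; every induced copy arises twice, once for each order of the leaves. -/
def IsInducedCherryK1 (q : V × V × V × V) : Prop :=
  G.Adj q.1 q.2.1 ∧ G.Adj q.1 q.2.2.1 ∧ q.2.1 ≠ q.2.2.1 ∧
    ¬ G.Adj q.2.1 q.2.2.1 ∧
    q.2.2.2 ≠ q.1 ∧ q.2.2.2 ≠ q.2.1 ∧ q.2.2.2 ≠ q.2.2.1 ∧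
    ¬ G.Adj q.1 q.2.2.2 ∧ ¬ G.Adj q.2.1 q.2.2.2 ∧ ¬ G.Adj q.2.2.1 q.2.2.2

variable {G}

theorem IsInducedCherryK1.eq_of_sym2_eq {c l₁ l₂ w c' l₁' w' : V}
    (h : G.IsInducedCherryK1 (c, l₁, l₂, w)) (h' : G.IsInducedCherryK1 (c', l₁', l₂, w'))
    (he : s(c, l₁) = s(c', l₁')) : c = c' ∧ l₁ = l₁' := by
  rcases Sym2.eq_iff.1 he with hsame | ⟨rfl, rfl⟩
  · exact hsame
  · exact (h.2.2.2.1 h'.2.1).elim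

variable [Fintype V]

theorem four_mul_card_isInducedCherryK1_sym2_eq_le (e : Sym2 V) :
    4 * Nat.card {q // G.IsInducedCherryK1 q ∧ s(q.1, q.2.1) = e} ≤ Fintype.card V ^ 2 := by
  classical
  let A : Finset V := {x | x ∉ e ∧ ∃ y ∈ e, G.Adj y x}
  let B : Finset V := {x | x ∉ e ∧ ∀ y ∈ e, ¬ G.Adj y x}
  have hAB : Disjoint A B :=
    disjoint_filter.2 fun _ _ ⟨_, y, hy, hadj⟩ ⟨_, hB⟩ => hB y hy hadj
  have hfibre : Nat.card {q // G.IsInducedCherryK1 q ∧ s(q.1, q.2.1) = e} ≤ #A * #B := by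
    rw [Nat.card_eq_fintype_card, Fintype.card_subtype, ← card_product]
    refine card_le_card_of_injOn (fun q => (q.2.2.1, q.2.2.2)) ?_ ?_
    · rintro ⟨c, l₁, l₂, w⟩ hq
      simp only [coe_filter, mem_univ, true_and, Set.mem_ofPred_eq] at hq
      obtain ⟨⟨-, hl₂, hl₁l₂, -, hwc, hwl₁, -, hcw, hl₁w, -⟩, rfl⟩ := hq
      simp only [coe_product, Set.mem_prod, mem_coe, mem_filter, mem_univ, true_and, A, B,
        Sym2.mem_iff, exists_eq_or_imp, forall_eq_or_imp, exists_eq_left, forall_eq]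
      exact ⟨⟨not_or.2 ⟨hl₂.ne', hl₁l₂.symm⟩, .inl hl₂⟩, not_or.2 ⟨hwc, hwl₁⟩, hcw, hl₁w⟩
    · rintro ⟨c, l₁, l₂, w⟩ hq ⟨c', l₁', l₂', w'⟩ hq' hpair
      simp only [coe_filter, mem_univ, true_and, Set.mem_ofPred_eq, Prod.mk.injEq] at hq hq' hpair
      obtain ⟨rfl, rfl⟩ := hpair
      obtain ⟨rfl, rfl⟩ := hq.1.eq_of_sym2_eq hq'.1 (hq.2.trans hq'.2.symm)
      rfl
  calc 4 * Nat.card _ ≤ 4 * #A * #B := by rw [mul_assoc]; gcongr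
    _ ≤ Fintype.card V ^ 2 := four_mul_card_mul_card_le_sq hAB

theorem four_mul_card_isInducedCherryK1_le :
    4 * Nat.card {q // G.IsInducedCherryK1 q} ≤ G.edgeSet.ncard * Fintype.card V ^ 2 := by
  classical
  have hfibres : Nat.card {q // G.IsInducedCherryK1 q} =
      ∑ e ∈ G.edgeFinset, Nat.card {q // G.IsInducedCherryK1 q ∧ s(q.1, q.2.1) = e} := by
    simp only [Nat.card_eq_fintype_card, Fintype.card_subtype, ← filter_filter]
    exact card_eq_sum_card_fiberwise fun q hq => by simpa using (mem_filter.1 hq).2.1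
  rw [hfibres, mul_sum, Set.ncard_eq_toFinset_card', ← edgeFinset]
  calc _ ≤ ∑ _e ∈ G.edgeFinset, Fintype.card V ^ 2 :=
        sum_le_sum fun e _ => four_mul_card_isInducedCherryK1_sym2_eq_le e
    _ = #G.edgeFinset * Fintype.card V ^ 2 := by rw [sum_const, smul_eq_mul]

end SimpleGraph

theorem stmt_5_general {V : Type*} [Fintype V] (G : SimpleGraph V) (n m : ℕ)
    (hn : n = Fintype.card V) (hm : m = G.edgeSet.ncard) :
    (Nat.card {q : V × V × V × V //
        G.Adj q.1 q.2.1 ∧ G.Adj q.1 q.2.2.1 ∧ q.2.1 ≠ q.2.2.1 ∧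
        ¬ G.Adj q.2.1 q.2.2.1 ∧
        q.2.2.2 ≠ q.1 ∧ q.2.2.2 ≠ q.2.1 ∧ q.2.2.2 ≠ q.2.2.1 ∧
        ¬ G.Adj q.1 q.2.2.2 ∧ ¬ G.Adj q.2.1 q.2.2.2 ∧ ¬ G.Adj q.2.2.1 q.2.2.2} : ℝ)
      ≤ m * n ^ 2 / 4 := by
  have h := G.four_mul_card_isInducedCherryK1_le
  rw [← hn, ← hm] at h
  rw [le_div_iff₀ four_pos, mul_comm]
  exact_mod_cast h

/-- for a graph G with n vertices and m ≤ C(n,2) edges, the number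
of induced copies of K_{1,2} ⊔ K₁ is at most m·n²/8. We count ordered tuples
(c, l₁, l₂, w) where c is the star centre, l₁, l₂ its leaves and w the isolated
vertex; each induced copy corresponds to exactly 2 such tuples (swapping the
leaves), so the bound reads (ordered count) ≤ 2·m·n²/8 = m·n²/4. -/
theorem stmt_5 {V : Type*} [Fintype V] (G : SimpleGraph V) (n m : ℕ)
    (hn : n = Fintype.card V) (hm : m = G.edgeSet.ncard)
    (hmn : m ≤ n.choose 2) :
    (Nat.card {q : V × V × V × V //
        G.Adj q.1 q.2.1 ∧ G.Adj q.1 q.2.2.1 ∧ q.2.1 ≠ q.2.2.1 ∧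
        ¬ G.Adj q.2.1 q.2.2.1 ∧
        q.2.2.2 ≠ q.1 ∧ q.2.2.2 ≠ q.2.1 ∧ q.2.2.2 ≠ q.2.2.1 ∧
        ¬ G.Adj q.1 q.2.2.2 ∧ ¬ G.Adj q.2.1 q.2.2.2 ∧ ¬ G.Adj q.2.2.1 q.2.2.2} : ℝ)
      ≤ m * n ^ 2 / 4 :=
  stmt_5_general G n m hn hm
end

section
/- Fix an integer i ≥ 2 and reals n > 1, 0 < p < 1. Define u_j = log(p) − log(n·p²)/j for each integer j ≥ 2, and c_i = 1/(2 + √((i+1)/(i−1))). Assume n·p² < 1 (so that u_i, u_{i+1} < 0). Then i²·u_i² ≥ (i+1)(i−1)·u_{i+1}² if and only if p ≥ n^{−1+c_i}. -/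
/-!
Write `L = log p < 0`, `A = log n > 0` and `r = √((i+1)/(i-1)) > 1`, so that `log (n p²) = A + 2L`,
`-i u_i = A - (i-2)L > 0` and `-(i+1) u_{i+1} = A - (i-1)L > 0`. Since `r² = (i+1)/(i-1)`, the inequality
`i² u_i² ≥ (i+1)(i-1) u_{i+1}²` is `(A - (i-1)L)² ≤ r² (A - (i-2)L)²`, i.e. `A - (i-1)L ≤ r (A - (i-2)L)`.
Eliminating `i` through `r² (i-1) = i+1`, the difference of the two sides factors as
`(r-1)/(r+1) · ((r+1)A + (r+2)L)`, and `(r+1)A + (r+2)L ≥ 0` is `log p ≥ (-1 + 1/(2+r)) log n`.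
-/

open Real

lemma one_lt_sqrt_add_one_div_sub_one {x : ℝ} (hx : 1 < x) : 1 < √((x + 1) / (x - 1)) := by
  rw [lt_sqrt zero_le_one, one_pow, one_lt_div (by linarith)]
  linarith

lemma sub_mul_le_mul_sub_mul_iff {r x A L : ℝ} (hr : 1 < r) (hrx : r ^ 2 * (x - 1) = x + 1) :
    A - (x - 1) * L ≤ r * (A - (x - 2) * L) ↔ 0 ≤ (r + 1) * A + (r + 2) * L := by
  have factor : (r + 1) * (r * (A - (x - 2) * L) - (A - (x - 1) * L))
      = (r - 1) * ((r + 1) * A + (r + 2) * L) := by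
    linear_combination (-L) * hrx
  rw [← sub_nonneg, ← mul_nonneg_iff_of_pos_left (by linarith : 0 < r + 1), factor,
    mul_nonneg_iff_of_pos_left (by linarith : 0 < r - 1)]

lemma neg_one_add_one_div_mul_le_iff {r A L : ℝ} (hr : 0 < 2 + r) :
    (-1 + 1 / (2 + r)) * A ≤ L ↔ 0 ≤ (r + 1) * A + (r + 2) * L := by
  have hcoeff : -1 + 1 / (2 + r) = -(r + 1) / (r + 2) := by
    field_simp [hr.ne', (by linarith : r + 2 ≠ 0)]
    ring
  rw [hcoeff, div_mul_eq_mul_div, div_le_iff₀ (by linarith)]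
  constructor <;> intro h <;> linarith

lemma succ_mul_pred_mul_sq_le_sq_mul_sq_iff {x A L : ℝ} (hx : 2 ≤ x) (hA : 0 < A) (hL : L < 0) :
    (x + 1) * (x - 1) * (L - (A + 2 * L) / (x + 1)) ^ 2 ≤ x ^ 2 * (L - (A + 2 * L) / x) ^ 2
      ↔ (-1 + 1 / (2 + √((x + 1) / (x - 1)))) * A ≤ L := by
  set r := √((x + 1) / (x - 1))
  have hr : 1 < r := one_lt_sqrt_add_one_div_sub_one (by linarith)
  have hr_sq : r ^ 2 = (x + 1) / (x - 1) := sq_sqrt (div_nonneg (by linarith) (by linarith))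
  have hrx : r ^ 2 * (x - 1) = x + 1 := by
    rw [hr_sq, div_mul_cancel₀ _ (by linarith)]
  have hu_x : x ^ 2 * (L - (A + 2 * L) / x) ^ 2 = (A - (x - 2) * L) ^ 2 := by
    field_simp
    ring
  have hu_succ : (x + 1) * (x - 1) * (L - (A + 2 * L) / (x + 1)) ^ 2
      = (A - (x - 1) * L) ^ 2 / r ^ 2 := by
    rw [hr_sq]
    field_simp
    ring
  have ha : 0 ≤ A - (x - 2) * L := by nlinarith
  have hb : 0 ≤ A - (x - 1) * L := by nlinarith
  rw [hu_x, hu_succ, div_le_iff₀ (by positivity), ← mul_pow,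
    pow_le_pow_iff_left₀ hb (by positivity) two_ne_zero, mul_comm _ r,
    sub_mul_le_mul_sub_mul_iff hr hrx, neg_one_add_one_div_mul_le_iff (by linarith)]

theorem stmt_8_general (i : ℕ) (hi : 2 ≤ i) (n p : ℝ) (hn : 1 < n) (hp : 0 < p) (hp1 : p < 1) :
    ((i : ℝ) ^ 2 * (Real.log p - Real.log (n * p ^ 2) / i) ^ 2
        ≥ ((i : ℝ) + 1) * ((i : ℝ) - 1)
          * (Real.log p - Real.log (n * p ^ 2) / ((i : ℝ) + 1)) ^ 2)
      ↔ p ≥ n ^ (-1 + 1 / (2 + Real.sqrt (((i : ℝ) + 1) / ((i : ℝ) - 1))) : ℝ) := by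
  have hlog : log (n * p ^ 2) = log n + 2 * log p := by
    rw [log_mul (by positivity) (by positivity), log_pow]
    push_cast
    ring
  rw [hlog, ge_iff_le, ge_iff_le, rpow_le_iff_le_log (by linarith) hp]
  exact succ_mul_pred_mul_sq_le_sq_mul_sq_iff (by exact_mod_cast hi) (log_pos hn) (log_neg hp hp1)

/-- Claim 6.12. With u_j = log p - log(np²)/j and
c_i = 1/(2 + √((i+1)/(i-1))), assuming np² < 1 we have
i²·u_i² ≥ (i+1)(i-1)·u_{i+1}² if and only if p ≥ n^(-1+c_i). -/
theorem stmt_8 (i : ℕ) (hi : 2 ≤ i) (n p : ℝ) (hn : 1 < n) (hp : 0 < p) (hp1 : p < 1)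
    (hnp : n * p ^ 2 < 1) :
    ((i : ℝ) ^ 2 * (Real.log p - Real.log (n * p ^ 2) / i) ^ 2
        ≥ ((i : ℝ) + 1) * ((i : ℝ) - 1)
          * (Real.log p - Real.log (n * p ^ 2) / ((i : ℝ) + 1)) ^ 2)
      ↔ p ≥ n ^ (-1 + 1 / (2 + Real.sqrt (((i : ℝ) + 1) / ((i : ℝ) - 1))) : ℝ) :=
  stmt_8_general i hi n p hn hp hp1
end

section
/- There exists p_0 > 0 such that for all 0 < p ≤ p_0 and all 0 ≤ x ≤ b ≤ 1 − p − 1/log(1/p), we have I_p(p + x) ≥ (x²/b²)·I_p(p + b). -/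
/-!
Write `f t = I_p(p + t)` and `T = 1 - p - 1 / log (1 / p)`. The claim says that `f t / t ^ 2` is
nonincreasing on `(0, T]`, i.e. that `g t = t * f' t - 2 * f t ≤ 0` there. Now `g 0 = g' 0 = 0`
and `g'' t = t * f''' t` with `f''' t = 1 / (1 - p - t) ^ 2 - 1 / (p + t) ^ 2`, so `g` is concave
on `[0, 1/2 - p]` and convex on `[1/2 - p, T]`; hence `g ≤ 0` on `[0, T]` once `g T ≤ 0`. At `T`
the two masses are `1 - m` and `m` with `m = 1 / log (1 / p)`, and
`g T = -log (1 / p) + log (log (1 / p)) + O(1)`, which is negative for `p ≤ exp (-8)`.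
-/

open Real Set

section RealCalculus

variable {f f' f'' : ℝ → ℝ} {D : Set ℝ}

lemma antitoneOn_of_hasDerivAt_nonpos' (hD : Convex ℝ D) (hf : ∀ x ∈ D, HasDerivAt f (f' x) x)
    (hf'₀ : ∀ x ∈ interior D, f' x ≤ 0) : AntitoneOn f D :=
  antitoneOn_of_hasDerivWithinAt_nonpos hD
    (fun x hx => (hf x hx).continuousAt.continuousWithinAt)
    (fun x hx => (hf x (interior_subset hx)).hasDerivWithinAt) hf'₀

lemma convexOn_of_hasDerivAt2_nonneg' (hD : Convex ℝ D) (hf : ∀ x ∈ D, HasDerivAt f (f' x) x)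
    (hf' : ∀ x ∈ D, HasDerivAt f' (f'' x) x) (hf''₀ : ∀ x ∈ interior D, 0 ≤ f'' x) :
    ConvexOn ℝ D f :=
  convexOn_of_hasDerivWithinAt2_nonneg hD
    (fun x hx => (hf x hx).continuousAt.continuousWithinAt)
    (fun x hx => (hf x (interior_subset hx)).hasDerivWithinAt)
    (fun x hx => (hf' x (interior_subset hx)).hasDerivWithinAt) hf''₀

lemma nonpos_of_concave_then_convex {m T : ℝ} (hm : 0 ≤ m) (hmT : m ≤ T)
    (hf : ∀ t ∈ Icc 0 T, HasDerivAt f (f' t) t) (hf' : ∀ t ∈ Icc 0 T, HasDerivAt f' (f'' t) t)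
    (h₀ : f 0 = 0) (h₀' : f' 0 = 0) (hconcave : ∀ t ∈ Ioo 0 m, f'' t ≤ 0)
    (hconvex : ∀ t ∈ Ioo m T, 0 ≤ f'' t) (hT : f T ≤ 0) {t : ℝ} (ht : t ∈ Icc 0 T) :
    f t ≤ 0 := by
  have hleft : ∀ s ∈ Icc 0 m, s ∈ Icc 0 T := fun s hs => ⟨hs.1, hs.2.trans hmT⟩
  have h₀m : (0 : ℝ) ∈ Icc 0 m := ⟨le_rfl, hm⟩
  have hf'_nonpos : ∀ s ∈ Icc 0 m, f' s ≤ 0 := by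
    have := antitoneOn_of_hasDerivAt_nonpos' (convex_Icc 0 m) (fun s hs => hf' s (hleft s hs))
      (by simpa only [interior_Icc] using hconcave)
    exact fun s hs => h₀' ▸ this h₀m hs hs.1
  have hf_nonpos : ∀ s ∈ Icc 0 m, f s ≤ 0 := by
    have := antitoneOn_of_hasDerivAt_nonpos' (convex_Icc 0 m) (fun s hs => hf s (hleft s hs))
      (fun s hs => hf'_nonpos s (interior_subset hs))
    exact fun s hs => h₀ ▸ this h₀m hs hs.1
  rcases le_total t m with htm | hmt
  · exact hf_nonpos t ⟨ht.1, htm⟩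
  · have hright : ∀ s ∈ Icc m T, s ∈ Icc 0 T := fun s hs => ⟨hm.trans hs.1, hs.2⟩
    have hconv := convexOn_of_hasDerivAt2_nonneg' (convex_Icc m T)
      (fun s hs => hf s (hright s hs)) (fun s hs => hf' s (hright s hs))
      (by simpa only [interior_Icc] using hconvex)
    calc f t ≤ max (f m) (f T) :=
          hconv.le_on_segment ⟨le_rfl, hmT⟩ ⟨hmT, le_rfl⟩
            (by rw [segment_eq_Icc hmT]; exact ⟨hmt, ht.2⟩)
      _ ≤ 0 := max_le (hf_nonpos m ⟨hm, le_rfl⟩) hT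

lemma antitoneOn_div_sq {b : ℝ} (hf : ∀ t ∈ Ioc 0 b, HasDerivAt f (f' t) t)
    (h : ∀ t ∈ Ioc 0 b, t * f' t ≤ 2 * f t) : AntitoneOn (fun t => f t / t ^ 2) (Ioc 0 b) := by
  refine antitoneOn_of_hasDerivAt_nonpos' (convex_Ioc 0 b)
    (f' := fun t => (f' t * t ^ 2 - f t * (2 * t)) / (t ^ 2) ^ 2)
    (fun t ht => (hf t ht).div (by simpa using hasDerivAt_pow 2 t) (pow_pos ht.1 2).ne') ?_
  rw [interior_Ioc]
  intro t ht
  have key : f' t * t ^ 2 - f t * (2 * t) = t * (t * f' t - 2 * f t) := by ring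
  rw [key]
  exact div_nonpos_of_nonpos_of_nonneg
    (mul_nonpos_of_nonneg_of_nonpos ht.1.le (by linarith [h t (Ioo_subset_Ioc_self ht)]))
    (by positivity)

theorem antitoneOn_div_sq_of_third_deriv {f₁ f₂ f₃ : ℝ → ℝ} {m T : ℝ} (hm : 0 ≤ m) (hmT : m ≤ T)
    (hf : ∀ t ∈ Icc 0 T, HasDerivAt f (f₁ t) t) (hf₁ : ∀ t ∈ Icc 0 T, HasDerivAt f₁ (f₂ t) t)
    (hf₂ : ∀ t ∈ Icc 0 T, HasDerivAt f₂ (f₃ t) t) (h₀ : f 0 = 0) (h₀' : f₁ 0 = 0)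
    (hneg : ∀ t ∈ Ioo 0 m, f₃ t ≤ 0) (hpos : ∀ t ∈ Ioo m T, 0 ≤ f₃ t)
    (hT : T * f₁ T ≤ 2 * f T) : AntitoneOn (fun t => f t / t ^ 2) (Ioc 0 T) := by
  have hg : ∀ t ∈ Icc 0 T, HasDerivAt (fun t => t * f₁ t - 2 * f t) (t * f₂ t - f₁ t) t := by
    intro t ht
    exact (((hasDerivAt_id' t).mul (hf₁ t ht)).sub ((hf t ht).const_mul 2)).congr_deriv (by ring)
  have hg' : ∀ t ∈ Icc 0 T, HasDerivAt (fun t => t * f₂ t - f₁ t) (t * f₃ t) t := by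
    intro t ht
    exact (((hasDerivAt_id' t).mul (hf₂ t ht)).sub (hf₁ t ht)).congr_deriv (by ring)
  refine antitoneOn_div_sq (fun t ht => hf t (Ioc_subset_Icc_self ht)) fun t ht => ?_
  have := nonpos_of_concave_then_convex hm hmT hg hg' (by simp [h₀]) (by simp [h₀'])
    (fun s hs => mul_nonpos_of_nonneg_of_nonpos hs.1.le (hneg s hs))
    (fun s hs => mul_nonneg (hm.trans hs.1.le) (hpos s hs)) (by linarith)
    (Ioc_subset_Icc_self ht)
  linarith

end RealCalculus

lemma exp_neg_eight_lt_half : exp (-8 : ℝ) < 1 / 2 := by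
  rw [exp_neg, one_div]
  exact inv_strictAnti₀ two_pos (by linarith [add_one_le_exp (8 : ℝ)])

lemma eight_le_log_one_div {p : ℝ} (hp : 0 < p) (hp₀ : p ≤ exp (-8)) : 8 ≤ log (1 / p) := by
  have := log_le_log hp hp₀
  rw [log_exp] at this
  rw [one_div, log_inv]
  linarith

lemma log_le_half_self {x : ℝ} (hx : 0 < x) : log x ≤ x / 2 := by
  have h₁ := log_le_sub_one_of_pos (half_pos hx)
  have h₂ := log_le_sub_one_of_pos (two_pos : (0 : ℝ) < 2)
  rw [log_div hx.ne' two_ne_zero] at h₁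
  linarith

lemma neg_two_mul_le_log_one_sub {m : ℝ} (hm : 0 ≤ m) (hm₁ : m ≤ 1 / 2) :
    -(2 * m) ≤ log (1 - m) := by
  have h₁ : 0 < 1 - m := by linarith
  have h₂ : (1 - m)⁻¹ ≤ 1 + 2 * m := by
    rw [inv_le_iff_one_le_mul₀ h₁]
    nlinarith
  linarith [one_sub_inv_le_log_of_pos h₁]

lemma one_div_sq_sub_one_div_sq_nonpos {a b : ℝ} (ha : 0 < a) (hab : a ≤ b) :
    1 / b ^ 2 - 1 / a ^ 2 ≤ 0 :=
  sub_nonpos.2 (one_div_le_one_div_of_le (by positivity) (pow_le_pow_left₀ ha.le hab 2))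

noncomputable def bernKL (p q : ℝ) : ℝ := q * log (q / p) + (1 - q) * log ((1 - q) / (1 - p))

section bernKL

variable {p q : ℝ}

lemma bernKL_self (hp : p ≠ 0) (hp₁ : 1 - p ≠ 0) : bernKL p p = 0 := by
  simp [bernKL, div_self hp, div_self hp₁]

lemma hasDerivAt_bernKL (hp : p ≠ 0) (hp₁ : 1 - p ≠ 0) (hq : q ≠ 0) (hq₁ : 1 - q ≠ 0) :
    HasDerivAt (bernKL p) (log (q / p) - log ((1 - q) / (1 - p))) q := by
  have h₁ : HasDerivAt (fun q => q / p) (1 / p) q := (hasDerivAt_id' q).div_const p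
  have h₂ : HasDerivAt (fun q => (1 - q) / (1 - p)) (-1 / (1 - p)) q :=
    ((hasDerivAt_id' q).const_sub 1).div_const (1 - p)
  have h := ((hasDerivAt_id' q).mul (h₁.log (div_ne_zero hq hp))).add
    (((hasDerivAt_id' q).const_sub 1).mul (h₂.log (div_ne_zero hq₁ hp₁)))
  refine h.congr_deriv ?_
  field_simp
  ring

lemma hasDerivAt_log_div_sub_log_div (hp : p ≠ 0) (hp₁ : 1 - p ≠ 0) (hq : q ≠ 0)
    (hq₁ : 1 - q ≠ 0) :
    HasDerivAt (fun q => log (q / p) - log ((1 - q) / (1 - p))) (1 / q + 1 / (1 - q)) q := by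
  have h₁ : HasDerivAt (fun q => q / p) (1 / p) q := (hasDerivAt_id' q).div_const p
  have h₂ : HasDerivAt (fun q => (1 - q) / (1 - p)) (-1 / (1 - p)) q :=
    ((hasDerivAt_id' q).const_sub 1).div_const (1 - p)
  refine ((h₁.log (div_ne_zero hq hp)).sub (h₂.log (div_ne_zero hq₁ hp₁))).congr_deriv ?_
  field_simp
  ring

lemma hasDerivAt_one_div_add_one_div_one_sub (hq : q ≠ 0) (hq₁ : 1 - q ≠ 0) :
    HasDerivAt (fun q => 1 / q + 1 / (1 - q)) (1 / (1 - q) ^ 2 - 1 / q ^ 2) q := by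
  have h := ((hasDerivAt_id' q).inv hq).add (((hasDerivAt_id' q).const_sub 1).inv hq₁)
  simp only [one_div]
  refine h.congr_deriv ?_
  ring

lemma bernKL_endpoint_mul_deriv_le (hp : 0 < p) (hL : 8 ≤ log (1 / p)) :
    let T := 1 - p - 1 / log (1 / p)
    T * (log ((p + T) / p) - log ((1 - (p + T)) / (1 - p))) ≤ 2 * bernKL p (p + T) := by
  intro T
  set L := log (1 / p)
  set m := 1 / L with hm_def
  have hL₀ : 0 < L := by linarith
  have hm₀ : 0 < m := by positivity
  have hm₁ : m ≤ 1 / 8 := by rw [hm_def]; exact one_div_le_one_div_of_le (by norm_num) hL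
  have hp₁ : p < 1 := by
    by_contra! h
    exact absurd (log_nonpos (by positivity) ((div_le_one hp).2 h)) (by linarith)
  have hlog_p : log p = -L := by simp [L, log_inv]
  have hlog_m : log m = -log L := by simp [m, log_inv]
  rw [show T = 1 - p - m from rfl, bernKL, show p + (1 - p - m) = 1 - m by ring,
    show 1 - (1 - m) = m by ring,
    log_div (by linarith) hp.ne', log_div hm₀.ne' (by linarith), hlog_p, hlog_m]
  have ha := neg_two_mul_le_log_one_sub hm₀.le (by linarith)
  have hc : log (1 - p) ≤ 0 := log_nonpos (by linarith) (by linarith)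
  have hl := log_le_half_self hL₀
  have hl₀ : 0 ≤ log L := log_nonneg (by linarith)
  -- `g T` of the header is the left side of `key` minus its right side, which is `≈ L`.
  have key : (1 + m - p) * (log L + log (1 - p)) ≤ (1 + p - m) * (log (1 - m) + L) := by
    nlinarith [mul_nonneg hp.le hl₀]
  linear_combination key

theorem bernKL_div_sq_antitoneOn (hp : 0 < p) (hp₂ : p ≤ 1 / 2) (hL : 8 ≤ log (1 / p)) :
    AntitoneOn (fun t => bernKL p (p + t) / t ^ 2) (Ioc 0 (1 - p - 1 / log (1 / p))) := by
  have hm₀ : 0 < 1 / log (1 / p) := one_div_pos.2 (by linarith)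
  have hm₁ : 1 / log (1 / p) ≤ 1 / 8 := one_div_le_one_div_of_le (by norm_num) hL
  have hq : ∀ t ∈ Icc 0 (1 - p - 1 / log (1 / p)), p + t ≠ 0 ∧ 1 - (p + t) ≠ 0 :=
    fun t ht => ⟨by linarith [ht.1], by linarith [ht.2]⟩
  refine antitoneOn_div_sq_of_third_deriv (m := 1 / 2 - p)
    (f₁ := fun t => log ((p + t) / p) - log ((1 - (p + t)) / (1 - p)))
    (f₂ := fun t => 1 / (p + t) + 1 / (1 - (p + t)))
    (f₃ := fun t => 1 / (1 - (p + t)) ^ 2 - 1 / (p + t) ^ 2) (by linarith) (by linarith)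
    (fun t ht => (hasDerivAt_bernKL hp.ne' (by linarith) (hq t ht).1
      (hq t ht).2).comp_const_add p t)
    (fun t ht => (hasDerivAt_log_div_sub_log_div hp.ne' (by linarith) (hq t ht).1
      (hq t ht).2).comp_const_add p t)
    (fun t ht => (hasDerivAt_one_div_add_one_div_one_sub (hq t ht).1
      (hq t ht).2).comp_const_add p t)
    (by simpa using bernKL_self hp.ne' (by linarith)) (by simp) ?_ ?_
    (bernKL_endpoint_mul_deriv_le hp hL)
  · exact fun t ht => one_div_sq_sub_one_div_sq_nonpos (by linarith [ht.1]) (by linarith [ht.2])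
  · intro t ht
    have := one_div_sq_sub_one_div_sq_nonpos (a := 1 - (p + t)) (b := p + t)
      (by linarith [ht.2]) (by linarith [ht.1])
    linarith

end bernKL

/-- Lemma A.3. There exists p₀ > 0 such that for all 0 < p ≤ p₀ and
0 ≤ x ≤ b ≤ 1 - p - 1/log(1/p), we have I_p(p+x) ≥ (x²/b²)·I_p(p+b), where
I_p(q) = q log(q/p) + (1-q) log((1-q)/(1-p)). -/
theorem stmt_10 :
    ∃ p₀ : ℝ, 0 < p₀ ∧ ∀ p : ℝ, 0 < p → p ≤ p₀ →
      ∀ x b : ℝ, 0 ≤ x → x ≤ b → b ≤ 1 - p - 1 / Real.log (1 / p) →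
        (p + x) * Real.log ((p + x) / p)
            + (1 - (p + x)) * Real.log ((1 - (p + x)) / (1 - p))
          ≥ (x ^ 2 / b ^ 2) *
            ((p + b) * Real.log ((p + b) / p)
              + (1 - (p + b)) * Real.log ((1 - (p + b)) / (1 - p))) := by
  refine ⟨exp (-8), exp_pos _, fun p hp hp₀ x b hx hxb hb => ?_⟩
  change x ^ 2 / b ^ 2 * bernKL p (p + b) ≤ bernKL p (p + x)
  have hL := eight_le_log_one_div hp hp₀
  have hp₂ : p ≤ 1 / 2 := hp₀.trans exp_neg_eight_lt_half.le
  rcases hx.eq_or_lt with rfl | hx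
  · simp [bernKL_self hp.ne' (by linarith : 1 - p ≠ 0)]
  · have hratio := bernKL_div_sq_antitoneOn hp hp₂ hL ⟨hx, hxb.trans hb⟩
      ⟨hx.trans_le hxb, hb⟩ hxb
    calc x ^ 2 / b ^ 2 * bernKL p (p + b) = x ^ 2 * (bernKL p (p + b) / b ^ 2) := by ring
      _ ≤ x ^ 2 * (bernKL p (p + x) / x ^ 2) := by gcongr
      _ = bernKL p (p + x) := by field_simp
end

section
/- Let R ≥ 2 be an integer and G a graph in which the vertices of degree at most R form an independent set and δ(G) ≥ 2. With x_i (2 ≤ i ≤ R) the number of edges having an endpoint of degree i, and x_{>R} the number of edges with both endpoints of degree > R, the number of induced 4-cycles in G satisfies: N_ind(C_4, G) ≤ Σ_{i=2}^R (x_i/i)·C(i,2)·(Σ_{j>i, j≤R} x_j/j + x_i/(2i)) + Σ_{i=2}^R x_i·e(G)·(i−1)/R + x_{>R}²/4. -/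
/-!
Count induced 4-cycles as ordered tuples `(a, b, c, d)`. Either one of the diagonals `{a, c}`,
`{b, d}` contains a vertex of degree `≤ R`, or all four degrees exceed `R`; rotating the tuple
swaps the diagonals. A tuple with a low vertex on `{a, c}` is charged to the endpoint `v` of
smaller degree, the ordered pair `(b, d)` of neighbours of `v`, and the opposite vertex `w`
with `deg v ≤ deg w`; reflecting `a ↔ c` turns the case `deg c < deg a` into `deg a < deg c`.
Since low vertices are independent, no edge is shared by two vertices of degree `i ≤ R`, so
there are at most `x_i / i` of them, and by the handshake lemma at most `2 e(G) / R` vertices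
have degree `> R`. An all-high tuple is determined by the ordered edge `(a, b)` and the
unordered edge `{c, d}`.
-/

open Finset

namespace Finset

variable {V : Type*} [Fintype V] (f : V → ℕ)

theorem sum_filter_le_eq_sum_Icc {m R : ℕ} (hm : ∀ v, m ≤ f v) (F : ℕ → ℕ) :
    ∑ v with f v ≤ R, F (f v) = ∑ i ∈ Icc m R, #{v | f v = i} * F i := by
  rw [← sum_fiberwise_of_maps_to (g := f) (t := Icc m R)
    fun v hv => mem_Icc.2 ⟨hm v, (mem_filter.1 hv).2⟩]
  refine sum_congr rfl fun i hi => ?_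
  rw [filter_filter, sum_congr rfl fun v hv => congrArg F (mem_filter.1 hv).2.2, sum_const,
    smul_eq_mul]
  congr 2
  ext v
  simp only [mem_filter, mem_univ, true_and, and_iff_right_iff_imp]
  exact fun hv => hv ▸ (mem_Icc.1 hi).2

variable [DecidableEq V]

theorem card_filter_lt_le_sum_Icc (i R : ℕ) :
    #{w | i < f w} ≤ ∑ j ∈ Icc (i + 1) R, #{w | f w = j} + #{w | R < f w} := by
  calc #{w | i < f w} ≤ #((Icc (i + 1) R).biUnion (fun j => ({w | f w = j} : Finset V)) ∪
        ({w | R < f w} : Finset V)) :=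
        card_le_card fun w hw => by
          by_cases hwR : f w ≤ R
          · exact mem_union_left _ (mem_biUnion.2 ⟨f w, mem_Icc.2 ⟨(mem_filter.1 hw).2, hwR⟩,
              by simp⟩)
          · exact mem_union_right _ (mem_filter.2 ⟨mem_univ _, not_le.1 hwR⟩)
    _ ≤ _ := (card_union_le _ _).trans (add_le_add card_biUnion_le le_rfl)

theorem card_filter_le_le_sum_Icc (i R : ℕ) :
    #{w | i ≤ f w} ≤
      #{w | f w = i} + (∑ j ∈ Icc (i + 1) R, #{w | f w = j} + #{w | R < f w}) := by
  calc #{w | i ≤ f w} ≤ #(({w | f w = i} : Finset V) ∪ ({w | i < f w} : Finset V)) :=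
        card_le_card fun w hw => by
          simp only [mem_filter, mem_union, mem_univ, true_and] at hw ⊢
          omega
    _ ≤ _ := (card_union_le _ _).trans (add_le_add le_rfl (card_filter_lt_le_sum_Icc f i R))

end Finset

theorem inducedC4_term_le {n x A A' H e R i : ℝ} (hi : 1 ≤ i) (hR : 0 < R) (hn : 0 ≤ n)
    (hA : 0 ≤ A) (hH : 0 ≤ H) (hnx : n * i ≤ x) (hAA : A ≤ A') (hHe : R * H ≤ 2 * e) :
    2 * (n * (i * (i - 1) * (n + 2 * (A + H)))) ≤
      8 * (x / i * (i * (i - 1) / 2) * (A' + x / (2 * i))) + 8 * (x * e * (i - 1) / R) := by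
  have hi0 : 0 < i := by linarith
  have hi1 : 0 ≤ i - 1 := by linarith
  have hc : 0 ≤ i * (i - 1) := by positivity
  have hnu : n ≤ x / i := (le_div_iff₀ hi0).2 hnx
  have hHR : H ≤ 2 * e / R := (le_div_iff₀ hR).2 (by linarith)
  have hx : 0 ≤ x := (mul_nonneg hn hi0.le).trans hnx
  calc 2 * (n * (i * (i - 1) * (n + 2 * (A + H))))
      = 2 * (n * n * (i * (i - 1))) + 4 * (n * (i * (i - 1)) * A) +
          4 * (n * i) * (i - 1) * H := by
        ring
    _ ≤ 2 * (x / i * (x / i) * (i * (i - 1))) + 4 * (x / i * (i * (i - 1)) * A') +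
        4 * x * (i - 1) * (2 * e / R) := by
        have := hn.trans hnu
        gcongr
    _ = _ := by field_simp; ring

theorem inducedC4_sum_le {R e E H : ℕ} {n x : ℕ → ℕ} (hR : 0 < R)
    (hnx : ∀ i ∈ Icc 2 R, n i * i ≤ x i) (hHe : R * H ≤ 2 * e) :
    ((2 * ∑ i ∈ Icc 2 R, n i * (i * (i - 1) * (n i + 2 * (∑ j ∈ Icc (i + 1) R, n j + H))) +
        2 * E ^ 2 : ℕ) : ℝ) ≤
      8 * (∑ i ∈ Icc 2 R, ((x i : ℝ) / i) * (i.choose 2 : ℝ) *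
              ((∑ j ∈ Icc (i + 1) R, (x j : ℝ) / j) + (x i : ℝ) / (2 * i))
            + ∑ i ∈ Icc 2 R, (x i : ℝ) * (e : ℝ) * ((i : ℝ) - 1) / R
            + (E : ℝ) ^ 2 / 4) := by
  have hdiv : ∀ j ∈ Icc 2 R, (n j : ℝ) ≤ x j / j := fun j hj =>
    (le_div_iff₀ (by have := (mem_Icc.1 hj).1; positivity)).2 (by exact_mod_cast hnx j hj)
  have hterm : ∀ i ∈ Icc 2 R,
      ((2 * (n i * (i * (i - 1) * (n i + 2 * (∑ j ∈ Icc (i + 1) R, n j + H)))) : ℕ) : ℝ) ≤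
        8 * ((x i : ℝ) / i * (i.choose 2 : ℝ) *
            ((∑ j ∈ Icc (i + 1) R, (x j : ℝ) / j) + (x i : ℝ) / (2 * i))) +
          8 * ((x i : ℝ) * (e : ℝ) * ((i : ℝ) - 1) / R) := by
    intro i hi
    have hi1 : 1 ≤ i := by have := (mem_Icc.1 hi).1; omega
    push_cast [Nat.cast_sub hi1]
    rw [Nat.cast_choose_two]
    refine inducedC4_term_le (by exact_mod_cast hi1) (by exact_mod_cast hR) (by positivity)
      (by positivity) (by positivity) (by exact_mod_cast hnx i hi)
      (sum_le_sum fun j hj => hdiv j ?_) (by exact_mod_cast hHe)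
    have := mem_Icc.1 hj
    exact mem_Icc.2 ⟨by omega, this.2⟩
  calc _ = ∑ i ∈ Icc 2 R,
        ((2 * (n i * (i * (i - 1) * (n i + 2 * (∑ j ∈ Icc (i + 1) R, n j + H)))) : ℕ) : ℝ) +
          2 * (E : ℝ) ^ 2 := by
        push_cast [mul_sum]
        rfl
    _ ≤ _ := by
        rw [mul_add, mul_add, mul_sum, mul_sum, ← sum_add_distrib]
        refine add_le_add (sum_le_sum hterm) (le_of_eq ?_)
        ring

namespace SimpleGraph

variable {V : Type*} (G : SimpleGraph V)

def IsInducedC4 (a b c d : V) : Prop :=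
  G.Adj a b ∧ G.Adj b c ∧ G.Adj c d ∧ G.Adj d a ∧ a ≠ c ∧ b ≠ d ∧ ¬G.Adj a c ∧ ¬G.Adj b d

variable {G} {a b c d : V}

theorem IsInducedC4.rotate (h : G.IsInducedC4 a b c d) : G.IsInducedC4 b c d a :=
  let ⟨hab, hbc, hcd, hda, hac, hbd, nac, nbd⟩ := h
  ⟨hbc, hcd, hda, hab, hbd, hac.symm, nbd, fun h => nac h.symm⟩

theorem IsInducedC4.reflect (h : G.IsInducedC4 a b c d) : G.IsInducedC4 c b a d :=
  let ⟨hab, hbc, hcd, hda, hac, hbd, nac, nbd⟩ := h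
  ⟨hbc.symm, hab.symm, hda.symm, hcd.symm, hac.symm, hbd, fun h => nac h.symm, nbd⟩

variable (G)

instance [DecidableEq V] [DecidableRel G.Adj] (a b c d : V) :
    Decidable (G.IsInducedC4 a b c d) := by
  unfold IsInducedC4; infer_instance

variable [Fintype V] [DecidableRel G.Adj]

theorem ncard_neighborSet_eq_degree (v : V) : (G.neighborSet v).ncard = G.degree v := by
  rw [Set.ncard_eq_toFinset_card', ← card_neighborSet_eq_degree, Set.toFinset_card]

theorem ncard_edgeSet_eq_card_edgeFinset : G.edgeSet.ncard = #G.edgeFinset := by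
  rw [← coe_edgeFinset, Set.ncard_coe_finset]

theorem ncard_sep_edgeSet (P : Sym2 V → Prop) [DecidablePred P] :
    {e ∈ G.edgeSet | P e}.ncard = #{e ∈ G.edgeFinset | P e} := by
  rw [← Set.ncard_coe_finset]
  congr 1
  ext e
  simp

theorem mul_card_filter_lt_degree_le (R : ℕ) : R * #{v | R < G.degree v} ≤ 2 * #G.edgeFinset :=
  calc R * #{v | R < G.degree v} = ∑ v with R < G.degree v, R := by
        rw [sum_const, smul_eq_mul, mul_comm]
    _ ≤ ∑ v with R < G.degree v, G.degree v := sum_le_sum fun v hv => (mem_filter.1 hv).2.le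
    _ ≤ ∑ v, G.degree v := sum_le_sum_of_subset (filter_subset _ _)
    _ = 2 * #G.edgeFinset := G.sum_degrees_eq_twice_card_edges

variable [DecidableEq V]

theorem card_filter_adj_mk_mem {E : Finset (Sym2 V)} (hE : E ⊆ G.edgeFinset) :
    #{p : V × V | G.Adj p.1 p.2 ∧ s(p.1, p.2) ∈ E} = 2 * #E := by
  calc #{p : V × V | G.Adj p.1 p.2 ∧ s(p.1, p.2) ∈ E} = #{d : G.Dart | d.edge ∈ E} :=
        card_bij' (fun p hp => ⟨p, (mem_filter.1 hp).2.1⟩) (fun d _ => d.toProd)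
          (by simp +contextual) (fun d hd => by simpa [Dart.edge, d.adj] using (mem_filter.1 hd).2)
          (by simp) (by simp)
    _ = ∑ e ∈ E, #{d : G.Dart | d.edge = e} :=
        (sum_card_fiberwise_eq_card_filter _ _ _).symm
    _ = 2 * #E := by
        rw [sum_const_nat fun e he => G.dart_edge_fiber_card e (mem_edgeFinset.1 (hE he)),
          mul_comm]

theorem card_degree_eq_mul_le (i : ℕ)
    (hi : ∀ v w, G.Adj v w → G.degree v = i → G.degree w ≠ i) :
    #{v | G.degree v = i} * i ≤ #{e ∈ G.edgeFinset | ∃ v ∈ e, G.degree v = i} := by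
  calc #{v | G.degree v = i} * i = ∑ v with G.degree v = i, #{d : G.Dart | d.fst = v} :=
        (sum_const_nat fun v hv => (G.dart_fst_fiber_card_eq_degree v).trans
          (mem_filter.1 hv).2).symm
    _ = #{d : G.Dart | G.degree d.fst = i} := by
        rw [sum_card_fiberwise_eq_card_filter]
        simp
    _ ≤ _ := by
        refine card_le_card_of_injOn Dart.edge (fun d hd => ?_) fun d hd d' hd' h => ?_
        · exact mem_filter.2 ⟨mem_edgeFinset.2 d.edge_mem, d.fst, Sym2.mem_mk_left _ _,
            (mem_filter.1 hd).2⟩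
        · rcases (G.dart_edge_eq_iff d d').1 h with h | rfl
          · exact h
          · exact absurd (mem_filter.1 hd).2 (hi _ _ d'.adj (mem_filter.1 hd').2)

def inducedC4Finset : Finset (V × V × V × V) :=
  {q | G.IsInducedC4 q.1 q.2.1 q.2.2.1 q.2.2.2}

theorem mem_inducedC4Finset {q : V × V × V × V} :
    q ∈ G.inducedC4Finset ↔ G.IsInducedC4 q.1 q.2.1 q.2.2.1 q.2.2.2 := by
  simp [inducedC4Finset]

theorem natCard_isInducedC4 :
    Nat.card {q : V × V × V × V // G.IsInducedC4 q.1 q.2.1 q.2.2.1 q.2.2.2} =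
      #G.inducedC4Finset := by
  rw [Nat.card_eq_fintype_card, Fintype.card_subtype]
  rfl

theorem card_filter_inducedC4Finset_le_sum (p : V → Prop) [DecidablePred p]
    (r : V → V → Prop) [DecidableRel r] :
    #{q ∈ G.inducedC4Finset | p q.1 ∧ r q.1 q.2.2.1} ≤
      ∑ v with p v, G.degree v * (G.degree v - 1) * #{w | r v w} := by
  rw [card_eq_sum_card_fiberwise (f := Prod.fst) (t := {v | p v})
    fun q hq => by simpa using (mem_filter.1 hq).2.1]
  refine sum_le_sum fun v _ => ?_
  calc _ ≤ #((G.neighborFinset v).offDiag ×ˢ ({w | r v w} : Finset V)) := by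
        refine card_le_card_of_injOn (fun q => ((q.2.1, q.2.2.2), q.2.2.1)) (fun q hq => ?_)
          fun q hq q' hq' h => ?_
        · simp only [mem_coe, mem_filter, mem_inducedC4Finset] at hq
          obtain ⟨⟨⟨hab, -, -, hda, -, hbd, -⟩, -, hr⟩, rfl⟩ := hq
          simpa [hab, hda.symm, hbd] using hr
        · simp only [mem_coe, mem_filter] at hq hq'
          simp only [Prod.mk.injEq] at h
          exact Prod.ext (hq.2.trans hq'.2.symm) (Prod.ext h.1.1 (Prod.ext h.2 h.1.2))
    _ = _ := by rw [card_product, offDiag_card, card_neighborFinset_eq_degree, Nat.mul_sub_one]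

theorem card_filter_inducedC4Finset_opposite_le (f : V → ℕ) (R : ℕ) :
    #{q ∈ G.inducedC4Finset | f q.1 ≤ R ∨ f q.2.2.1 ≤ R} ≤
      #{q ∈ G.inducedC4Finset | f q.1 ≤ R ∧ f q.1 ≤ f q.2.2.1} +
        #{q ∈ G.inducedC4Finset | f q.1 ≤ R ∧ f q.1 < f q.2.2.1} := by
  calc _ ≤ #({q ∈ G.inducedC4Finset | f q.1 ≤ R ∧ f q.1 ≤ f q.2.2.1} ∪
          {q ∈ G.inducedC4Finset | f q.2.2.1 ≤ R ∧ f q.2.2.1 < f q.1}) :=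
        card_le_card fun q hq => by
          rw [mem_filter] at hq
          simp only [mem_union, mem_filter, hq.1, true_and]
          omega
    _ ≤ _ := by
        refine (card_union_le _ _).trans (add_le_add le_rfl (card_le_card_of_injOn
          (fun q => (q.2.2.1, q.2.1, q.1, q.2.2.2)) (fun q hq => ?_) fun q _ q' _ h => ?_))
        · simp only [coe_filter, Set.mem_ofPred_eq, mem_inducedC4Finset] at hq ⊢
          exact ⟨hq.1.reflect, hq.2⟩
        · simp only [Prod.mk.injEq] at h
          exact Prod.ext h.2.2.1 (Prod.ext h.2.1 (Prod.ext h.1 h.2.2.2))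

theorem card_filter_inducedC4Finset_forall_le (S : V → Prop) [DecidablePred S] :
    #{q ∈ G.inducedC4Finset | S q.1 ∧ S q.2.1 ∧ S q.2.2.1 ∧ S q.2.2.2} ≤
      2 * #{e ∈ G.edgeFinset | ∀ v ∈ e, S v} ^ 2 := by
  set E : Finset (Sym2 V) := {e ∈ G.edgeFinset | ∀ v ∈ e, S v}
  calc _ ≤ #(({p : V × V | G.Adj p.1 p.2 ∧ s(p.1, p.2) ∈ E} : Finset (V × V)) ×ˢ E) := by
        refine card_le_card_of_injOn (fun q => ((q.1, q.2.1), s(q.2.2.1, q.2.2.2)))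
          (fun q hq => ?_) fun q hq q' hq' h => ?_
        · simp only [coe_filter, Set.mem_ofPred_eq, mem_inducedC4Finset] at hq
          obtain ⟨⟨hab, -, hcd, -⟩, ha, hb, hc, hd⟩ := hq
          simp [E, hab, hcd, ha, hb, hc, hd]
        · simp only [coe_filter, Set.mem_ofPred_eq, mem_inducedC4Finset] at hq hq'
          simp only [Prod.mk.injEq, Sym2.eq_iff] at h
          obtain ⟨⟨ha, hb⟩, ⟨hc, hd⟩ | ⟨hc, hd⟩⟩ := h
          · exact Prod.ext ha (Prod.ext hb (Prod.ext hc hd))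
          · -- the reversed orientation of `{c, d}` would make `b` adjacent to `d`
            refine absurd ?_ hq'.1.2.2.2.2.2.2.2
            rw [← hb, ← hc]
            exact hq.1.2.1
    _ = 2 * #E ^ 2 := by rw [card_product, G.card_filter_adj_mk_mem (filter_subset _ _)]; ring

theorem card_inducedC4Finset_le (R : ℕ) :
    #G.inducedC4Finset ≤
      2 * ∑ v with G.degree v ≤ R, G.degree v * (G.degree v - 1) *
          (#{w | G.degree v ≤ G.degree w} + #{w | G.degree v < G.degree w}) +
        2 * #{e ∈ G.edgeFinset | ∀ v ∈ e, R < G.degree v} ^ 2 := by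
  have hcover : #G.inducedC4Finset ≤
      #{q ∈ G.inducedC4Finset | G.degree q.1 ≤ R ∨ G.degree q.2.2.1 ≤ R} +
        #{q ∈ G.inducedC4Finset | G.degree q.2.1 ≤ R ∨ G.degree q.2.2.2 ≤ R} +
        #{q ∈ G.inducedC4Finset | R < G.degree q.1 ∧ R < G.degree q.2.1 ∧
          R < G.degree q.2.2.1 ∧ R < G.degree q.2.2.2} := by
    refine (card_le_card fun q hq => ?_).trans
      ((card_union_le _ _).trans (add_le_add (card_union_le _ _) le_rfl))
    simp only [mem_union, mem_filter, hq, true_and]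
    omega
  have hrotate : #{q ∈ G.inducedC4Finset | G.degree q.2.1 ≤ R ∨ G.degree q.2.2.2 ≤ R} ≤
      #{q ∈ G.inducedC4Finset | G.degree q.1 ≤ R ∨ G.degree q.2.2.1 ≤ R} := by
    refine card_le_card_of_injOn (fun q => (q.2.1, q.2.2.1, q.2.2.2, q.1)) (fun q hq => ?_)
      fun q _ q' _ h => ?_
    · simp only [coe_filter, Set.mem_ofPred_eq, mem_inducedC4Finset] at hq ⊢
      exact ⟨hq.1.rotate, hq.2⟩
    · simp only [Prod.mk.injEq] at h
      exact Prod.ext h.2.2.2 (Prod.ext h.1 (Prod.ext h.2.1 h.2.2.1))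
  have hlow := (G.card_filter_inducedC4Finset_opposite_le (G.degree ·) R).trans <| add_le_add
    (G.card_filter_inducedC4Finset_le_sum (fun v => G.degree v ≤ R) (G.degree · ≤ G.degree ·))
    (G.card_filter_inducedC4Finset_le_sum (fun v => G.degree v ≤ R) (G.degree · < G.degree ·))
  rw [← sum_add_distrib] at hlow
  simp only [← mul_add] at hlow
  have hhigh := G.card_filter_inducedC4Finset_forall_le (R < G.degree ·)
  omega

theorem card_inducedC4Finset_le_sum_Icc (R : ℕ) (hmin : ∀ v, 2 ≤ G.degree v) :
    #G.inducedC4Finset ≤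
      2 * ∑ i ∈ Icc 2 R, #{v | G.degree v = i} * (i * (i - 1) * (#{v | G.degree v = i} +
          2 * (∑ j ∈ Icc (i + 1) R, #{v | G.degree v = j} + #{v | R < G.degree v}))) +
        2 * #{e ∈ G.edgeFinset | ∀ v ∈ e, R < G.degree v} ^ 2 := by
  refine (G.card_inducedC4Finset_le R).trans (add_le_add (Nat.mul_le_mul_left 2
    ((sum_le_sum fun v _ => ?_).trans_eq (sum_filter_le_eq_sum_Icc (G.degree ·) hmin _))) le_rfl)
  have hle := card_filter_le_le_sum_Icc (G.degree ·) (G.degree v) R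
  have hlt := card_filter_lt_le_sum_Icc (G.degree ·) (G.degree v) R
  exact Nat.mul_le_mul_left _ (by omega)

end SimpleGraph

/-- Induced 4-cycles are counted as ordered 4-tuples; each unordered copy gives 8 of them, whence
the factor 8. -/
theorem stmt_14 {V : Type*} [Fintype V] (G : SimpleGraph V) (R : ℕ) (hR : 2 ≤ R)
    (hInd : ∀ v w : V, G.Adj v w →
      ¬((G.neighborSet v).ncard ≤ R ∧ (G.neighborSet w).ncard ≤ R))
    (hmin : ∀ v : V, 2 ≤ (G.neighborSet v).ncard)
    (x : ℕ → ℕ)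
    (hx : ∀ i, x i = {e ∈ G.edgeSet | ∃ v ∈ e, (G.neighborSet v).ncard = i}.ncard)
    (xgt : ℕ)
    (hxgt : xgt = {e ∈ G.edgeSet | ∀ v ∈ e, R < (G.neighborSet v).ncard}.ncard) :
    (Nat.card {q : V × V × V × V //
        G.Adj q.1 q.2.1 ∧ G.Adj q.2.1 q.2.2.1 ∧ G.Adj q.2.2.1 q.2.2.2 ∧
        G.Adj q.2.2.2 q.1 ∧ q.1 ≠ q.2.2.1 ∧ q.2.1 ≠ q.2.2.2 ∧
        ¬ G.Adj q.1 q.2.2.1 ∧ ¬ G.Adj q.2.1 q.2.2.2} : ℝ)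
      ≤ 8 * (∑ i ∈ Finset.Icc 2 R, ((x i : ℝ) / i) * (i.choose 2 : ℝ) *
              ((∑ j ∈ Finset.Icc (i + 1) R, (x j : ℝ) / j) + (x i : ℝ) / (2 * i))
            + ∑ i ∈ Finset.Icc 2 R,
                (x i : ℝ) * (G.edgeSet.ncard : ℝ) * ((i : ℝ) - 1) / R
            + (xgt : ℝ) ^ 2 / 4) := by
  classical
  simp only [G.ncard_neighborSet_eq_degree] at hInd hmin hx hxgt
  have hnx : ∀ i ∈ Icc 2 R, #{v | G.degree v = i} * i ≤ x i := fun i hi => by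
    rw [hx, G.ncard_sep_edgeSet]
    exact G.card_degree_eq_mul_le i fun v w hvw hv hw =>
      hInd v w hvw ⟨hv ▸ (mem_Icc.1 hi).2, hw ▸ (mem_Icc.1 hi).2⟩
  rw [hxgt, G.ncard_sep_edgeSet, G.ncard_edgeSet_eq_card_edgeFinset]
  change (Nat.card {q : V × V × V × V // G.IsInducedC4 q.1 q.2.1 q.2.2.1 q.2.2.2} : ℝ) ≤ _
  rw [G.natCard_isInducedC4]
  exact (Nat.cast_le.2 (G.card_inducedC4Finset_le_sum_Icc R hmin)).trans
    (inducedC4_sum_le (by omega) hnx (G.mul_card_filter_lt_degree_le R))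
end

section
/- Let u_{xy} ≥ 0 for all pairs {x,y} from [n], and let 𝓛 ⊆ C([n],2) be any set of pairs. Let 𝓒 be the set of (unordered) 4-cycles on [n] all four of whose edges lie in 𝓛. Then Σ over 4-cycles (a_0,a_1,a_2,a_3) in 𝓒 of u_{a_0a_1}·u_{a_1a_2}·u_{a_2a_3}·u_{a_3a_0}·(1−u_{a_0a_2})·(1−u_{a_1a_3}) ≤ (1/4)·(Σ_{{x,y}∈𝓛} u_{xy})², provided all u values lie in [0,1]. -/
/-!
Split each ordered 4-cycle `(a, b, c, d)` into its matching `{ab, cd}` and pair it with the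
4-cycle `(a, b, d, c)` through the same matching. Writing `x = u_bc`, `y = u_da`, `z = u_ac`,
`w = u_bd`, the two cycles together weigh `u_ab u_cd (xy(1-z)(1-w) + zw(1-x)(1-y))`, and the
bracket is at most `(1 - z) + z = 1`. Summing over ordered pairs `(ab, cd)` of disjoint `L`-edges
bounds twice the left side by `∑ u_ab u_cd ≤ (∑ u)²`.
-/

open Finset

lemma mul_mul_one_sub_mul_one_sub_add_le_one {x y z w : ℝ}
    (hx₀ : 0 ≤ x) (hx₁ : x ≤ 1) (hy₀ : 0 ≤ y) (hy₁ : y ≤ 1)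
    (hz₀ : 0 ≤ z) (hz₁ : z ≤ 1) (hw₀ : 0 ≤ w) (hw₁ : w ≤ 1) :
    x * y * (1 - z) * (1 - w) + z * w * (1 - x) * (1 - y) ≤ 1 := by
  have h₁ : x * y * (1 - w) ≤ 1 :=
    mul_le_one₀ (mul_le_one₀ hx₁ hy₀ hy₁) (sub_nonneg.2 hw₁) (by linarith)
  have h₂ : w * (1 - x) * (1 - y) ≤ 1 :=
    mul_le_one₀ (mul_le_one₀ hw₁ (sub_nonneg.2 hx₁) (by linarith)) (sub_nonneg.2 hy₁)
      (by linarith)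
  calc x * y * (1 - z) * (1 - w) + z * w * (1 - x) * (1 - y)
      = (x * y * (1 - w)) * (1 - z) + (w * (1 - x) * (1 - y)) * z := by ring
    _ ≤ 1 * (1 - z) + 1 * z := by gcongr
    _ = 1 := by ring

lemma Finset.two_mul_sum_le_of_involutive {α : Type*} {s : Finset α} {φ : α → α}
    (hφ : Function.Involutive φ) (hs : ∀ q ∈ s, φ q ∈ s) {f g : α → ℝ}
    (hfg : ∀ q ∈ s, f q + f (φ q) ≤ g q) :
    2 * ∑ q ∈ s, f q ≤ ∑ q ∈ s, g q := by
  have hcomp : ∑ q ∈ s, f (φ q) = ∑ q ∈ s, f q :=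
    sum_nbij' φ φ hs hs (fun q _ => hφ q) (fun q _ => hφ q) (fun _ _ => rfl)
  calc 2 * ∑ q ∈ s, f q = ∑ q ∈ s, (f q + f (φ q)) := by rw [sum_add_distrib, hcomp]; ring
    _ ≤ ∑ q ∈ s, g q := sum_le_sum hfg

section FourCycles

variable {V : Type*}

def fourCycleWeight (u : V → V → ℝ) (a b c d : V) : ℝ :=
  u a b * u b c * u c d * u d a * (1 - u a c) * (1 - u b d)

variable {u : V → V → ℝ}

lemma fourCycleWeight_nonneg (h0 : ∀ x y, 0 ≤ u x y) (h1 : ∀ x y, u x y ≤ 1) (a b c d : V) :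
    0 ≤ fourCycleWeight u a b c d := by
  unfold fourCycleWeight
  have := sub_nonneg.2 (h1 a c)
  have := sub_nonneg.2 (h1 b d)
  have := h0 a b; have := h0 b c; have := h0 c d; have := h0 d a
  positivity

lemma fourCycleWeight_add_fourCycleWeight_swap_le (hsym : ∀ x y, u x y = u y x)
    (h0 : ∀ x y, 0 ≤ u x y) (h1 : ∀ x y, u x y ≤ 1) (a b c d : V) :
    fourCycleWeight u a b c d + fourCycleWeight u a b d c ≤ u a b * u c d := by
  have key := mul_mul_one_sub_mul_one_sub_add_le_one (h0 b c) (h1 b c) (h0 d a) (h1 d a)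
    (h0 a c) (h1 a c) (h0 b d) (h1 b d)
  calc fourCycleWeight u a b c d + fourCycleWeight u a b d c
      = u a b * u c d * (u b c * u d a * (1 - u a c) * (1 - u b d)
          + u a c * u b d * (1 - u b c) * (1 - u d a)) := by
        simp only [fourCycleWeight, hsym d c, hsym c a, hsym a d]; ring
    _ ≤ u a b * u c d * 1 := by gcongr; exact mul_nonneg (h0 a b) (h0 c d)
    _ = u a b * u c d := mul_one _

variable [Fintype V] [DecidableEq V] (L : V → V → Prop) [DecidableRel L]

def fourCycles : Finset (V × V × V × V) :=
  univ.filter fun q =>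
    q.1 ≠ q.2.1 ∧ q.1 ≠ q.2.2.1 ∧ q.1 ≠ q.2.2.2 ∧ q.2.1 ≠ q.2.2.1 ∧
    q.2.1 ≠ q.2.2.2 ∧ q.2.2.1 ≠ q.2.2.2 ∧
    L q.1 q.2.1 ∧ L q.2.1 q.2.2.1 ∧ L q.2.2.1 q.2.2.2 ∧ L q.2.2.2 q.1

/-- Ordered pairs of vertex-disjoint `L`-edges `(a, b)`, `(c, d)`, encoded as `(a, b, c, d)`. -/
def disjointEdgePairs : Finset (V × V × V × V) :=
  univ.filter fun q =>
    q.1 ≠ q.2.1 ∧ q.1 ≠ q.2.2.1 ∧ q.1 ≠ q.2.2.2 ∧ q.2.1 ≠ q.2.2.1 ∧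
    q.2.1 ≠ q.2.2.2 ∧ q.2.2.1 ≠ q.2.2.2 ∧ L q.1 q.2.1 ∧ L q.2.2.1 q.2.2.2

def orientedEdges : Finset (V × V) :=
  univ.filter fun e => L e.1 e.2 ∧ e.1 ≠ e.2

lemma fourCycles_eq_filter_disjointEdgePairs :
    fourCycles L = (disjointEdgePairs L).filter fun q => L q.2.1 q.2.2.1 ∧ L q.2.2.2 q.1 := by
  ext q
  simp only [fourCycles, disjointEdgePairs, mem_filter, mem_univ, true_and]
  tauto

lemma swap_mem_disjointEdgePairs (hLsym : ∀ x y, L x y → L y x) {q : V × V × V × V}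
    (hq : q ∈ disjointEdgePairs L) : (q.1, q.2.1, q.2.2.2, q.2.2.1) ∈ disjointEdgePairs L := by
  simp only [disjointEdgePairs, mem_filter, mem_univ, true_and] at hq ⊢
  obtain ⟨hab, hac, had, hbc, hbd, hcd, hLab, hLcd⟩ := hq
  exact ⟨hab, had, hac, hbd, hbc, hcd.symm, hLab, hLsym _ _ hLcd⟩

lemma two_mul_sum_fourCycles_le (hsym : ∀ x y, u x y = u y x) (h0 : ∀ x y, 0 ≤ u x y)
    (h1 : ∀ x y, u x y ≤ 1) (hLsym : ∀ x y, L x y → L y x) :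
    2 * ∑ q ∈ fourCycles L, fourCycleWeight u q.1 q.2.1 q.2.2.1 q.2.2.2
      ≤ ∑ q ∈ disjointEdgePairs L, u q.1 q.2.1 * u q.2.2.1 q.2.2.2 := by
  rw [fourCycles_eq_filter_disjointEdgePairs, sum_filter]
  refine two_mul_sum_le_of_involutive (φ := fun q => (q.1, q.2.1, q.2.2.2, q.2.2.1))
    (fun _ => rfl) (fun q hq => swap_mem_disjointEdgePairs L hLsym hq) fun ⟨a, b, c, d⟩ _ => ?_
  have hpair := fourCycleWeight_add_fourCycleWeight_swap_le hsym h0 h1 a b c d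
  have hw₁ := fourCycleWeight_nonneg h0 h1 a b c d
  have hw₂ := fourCycleWeight_nonneg h0 h1 a b d c
  dsimp only
  split_ifs <;> linarith

lemma sum_disjointEdgePairs_le_sq (h0 : ∀ x y, 0 ≤ u x y) :
    ∑ q ∈ disjointEdgePairs L, u q.1 q.2.1 * u q.2.2.1 q.2.2.2
      ≤ (∑ e ∈ orientedEdges L, u e.1 e.2) ^ 2 := by
  let pairUp : (V × V × V × V) ↪ (V × V) × (V × V) :=
    (Equiv.prodAssoc V V (V × V)).symm.toEmbedding
  have hsub : (disjointEdgePairs L).map pairUp ⊆ orientedEdges L ×ˢ orientedEdges L := by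
    intro p hp
    obtain ⟨q, hq, rfl⟩ := mem_map.1 hp
    simp only [disjointEdgePairs, mem_filter, mem_univ, true_and] at hq
    simp only [orientedEdges, pairUp, mem_product, mem_filter, mem_univ, true_and]
    exact ⟨⟨hq.2.2.2.2.2.2.1, hq.1⟩, ⟨hq.2.2.2.2.2.2.2, hq.2.2.2.2.2.1⟩⟩
  calc ∑ q ∈ disjointEdgePairs L, u q.1 q.2.1 * u q.2.2.1 q.2.2.2
      = ∑ p ∈ (disjointEdgePairs L).map pairUp, u p.1.1 p.1.2 * u p.2.1 p.2.2 :=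
        by rw [sum_map]; rfl
    _ ≤ ∑ p ∈ orientedEdges L ×ˢ orientedEdges L, u p.1.1 p.1.2 * u p.2.1 p.2.2 :=
        sum_le_sum_of_subset_of_nonneg hsub fun _ _ _ => mul_nonneg (h0 _ _) (h0 _ _)
    _ = (∑ e ∈ orientedEdges L, u e.1 e.2) ^ 2 := by rw [sq, sum_mul_sum, sum_product]

end FourCycles

open scoped Classical in
/-- inequality (7.3). For weights u ∈ [0,1] and a set 𝓛 of pairs,
the weighted count of (induced-weighted) 4-cycles with all four edges in 𝓛 is at
most (1/4)(Σ_{{x,y}∈𝓛} u_{xy})². Here 4-cycles are counted as ordered tuples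
(a₀,a₁,a₂,a₃) of pairwise-distinct vertices (8 tuples per unordered 4-cycle), and
the sum Σ over 𝓛 is taken over ordered pairs (2 per unordered pair), so the bound
reads: LHS ≤ 8·(1/4)·(T/2)² = T²/2 where T is the ordered-pair sum. -/
theorem stmt_15 (n : ℕ) (u : Fin n → Fin n → ℝ) (hsym : ∀ x y, u x y = u y x)
    (h0 : ∀ x y, 0 ≤ u x y) (h1 : ∀ x y, u x y ≤ 1)
    (L : Fin n → Fin n → Prop) (hLsym : ∀ x y, L x y → L y x) :
    ∑ q ∈ Finset.univ.filter
        (fun q : Fin n × Fin n × Fin n × Fin n =>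
          q.1 ≠ q.2.1 ∧ q.1 ≠ q.2.2.1 ∧ q.1 ≠ q.2.2.2 ∧ q.2.1 ≠ q.2.2.1 ∧
          q.2.1 ≠ q.2.2.2 ∧ q.2.2.1 ≠ q.2.2.2 ∧
          L q.1 q.2.1 ∧ L q.2.1 q.2.2.1 ∧ L q.2.2.1 q.2.2.2 ∧ L q.2.2.2 q.1),
        u q.1 q.2.1 * u q.2.1 q.2.2.1 * u q.2.2.1 q.2.2.2 * u q.2.2.2 q.1 *
          (1 - u q.1 q.2.2.1) * (1 - u q.2.1 q.2.2.2)
      ≤ (∑ e ∈ Finset.univ.filter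
            (fun e : Fin n × Fin n => L e.1 e.2 ∧ e.1 ≠ e.2), u e.1 e.2) ^ 2 / 2 := by
  have hcycles := two_mul_sum_fourCycles_le L hsym h0 h1 hLsym
  have hpairs := sum_disjointEdgePairs_le_sq L h0
  change ∑ q ∈ fourCycles L, fourCycleWeight u q.1 q.2.1 q.2.2.1 q.2.2.2
    ≤ (∑ e ∈ orientedEdges L, u e.1 e.2) ^ 2 / 2
  linarith
end

section
/- Let μ_1, …, μ_n be probability measures on spaces Ω_1, …, Ω_n and μ = Π μ_i their product. Let A_1, …, A_m be nonempty subsets of [n] such that every j ∈ [n] belongs to at most two of the sets A_i. For each i let f_i be a square-integrable function on Ω_{A_i} = Π_{j∈A_i} Ω_j with respect to μ_{A_i} = Π_{j∈A_i} μ_j. Then ∫ Π_{i=1}^m |f_i| dμ ≤ Π_{i=1}^m (∫ |f_i|² dμ_{A_i})^{1/2}. -/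
/-!
Write `F i = f i ^ 2` and integrate out the coordinates one at a time, keeping the bound
`∫⋯∫_s ∏ √F_i ≤ ∏ √(∫⋯∫_s F_i)` for the partial marginals. When coordinate `k` is integrated,
every marginal of an `F i` with `k ∉ A i` is constant in `x k`, and at most two of them are not,
so Cauchy–Schwarz in the variable `x k` on a probability space closes the induction step.
-/

open MeasureTheory ENNReal Finset Function

section Holder

variable {α ι : Type*} [MeasurableSpace α] {ν : Measure α} [IsProbabilityMeasure ν]

theorem lintegral_prod_rpow_le_of_sum_le_one (s : Finset ι) {f : ι → α → ℝ≥0∞}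
    (hf : ∀ i ∈ s, AEMeasurable (f i) ν) {p : ι → ℝ} (hp : ∑ i ∈ s, p i ≤ 1)
    (hp₀ : ∀ i ∈ s, 0 ≤ p i) :
    ∫⁻ a, ∏ i ∈ s, f i a ^ p i ∂ν ≤ ∏ i ∈ s, (∫⁻ a, f i a ∂ν) ^ p i := by
  -- pad with the constant function `1` to make the exponents sum to `1`
  simpa using lintegral_mul_prod_norm_pow_le s (aemeasurable_const (b := (1 : ℝ≥0∞))) hf
    (1 - ∑ i ∈ s, p i) (by ring) (by linarith) hp₀

theorem lintegral_prod_sqrt_le_of_card_le_two [Fintype ι] (s : Finset ι) (hs : #s ≤ 2)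
    {g : ι → α → ℝ≥0∞} (hg : ∀ i ∈ s, AEMeasurable (g i) ν) (c : ι → ℝ≥0∞)
    (hc : ∀ i ∉ s, ∀ a, g i a = c i) :
    ∫⁻ a, ∏ i, g i a ^ (1 / 2 : ℝ) ∂ν ≤ ∏ i, (∫⁻ a, g i a ∂ν) ^ (1 / 2 : ℝ) := by
  classical
  have hsplit : ∀ a, ∏ i, g i a ^ (1 / 2 : ℝ)
      = (∏ i ∈ sᶜ, c i ^ (1 / 2 : ℝ)) * ∏ i ∈ s, g i a ^ (1 / 2 : ℝ) := fun a => by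
    rw [← prod_mul_prod_compl s, mul_comm]
    congr 1
    exact prod_congr rfl fun i hi => by rw [hc i (mem_compl.mp hi)]
  have hint : ∀ i ∉ s, ∫⁻ a, g i a ∂ν = c i := fun i hi => by
    simp [hc i hi]
  have hsum : ∑ i ∈ s, (1 / 2 : ℝ) ≤ 1 := by
    rw [sum_const, nsmul_eq_mul]
    have : (#s : ℝ) ≤ 2 := by exact_mod_cast hs
    linarith
  calc ∫⁻ a, ∏ i, g i a ^ (1 / 2 : ℝ) ∂ν
      = (∏ i ∈ sᶜ, c i ^ (1 / 2 : ℝ)) * ∫⁻ a, ∏ i ∈ s, g i a ^ (1 / 2 : ℝ) ∂ν := by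
        simp_rw [hsplit]
        exact lintegral_const_mul'' _
          (Finset.aemeasurable_fun_prod _ fun i hi => (hg i hi).pow_const _)
    _ ≤ (∏ i ∈ sᶜ, c i ^ (1 / 2 : ℝ)) * ∏ i ∈ s, (∫⁻ a, g i a ∂ν) ^ (1 / 2 : ℝ) := by
        gcongr
        exact lintegral_prod_rpow_le_of_sum_le_one s hg hsum fun _ _ => by norm_num
    _ = ∏ i, (∫⁻ a, g i a ∂ν) ^ (1 / 2 : ℝ) := by
        rw [← prod_mul_prod_compl s, mul_comm]
        congr 1
        exact prod_congr rfl fun i hi => by rw [hint i (mem_compl.mp hi)]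

end Holder

section Marginal

variable {δ : Type*} [DecidableEq δ] {X : δ → Type*} [∀ j, MeasurableSpace (X j)]
  {μ : ∀ j, Measure (X j)}

theorem DependsOn.lmarginal {f : (∀ j, X j) → ℝ≥0∞} {A : Set δ} (hf : DependsOn f A)
    (s : Finset δ) : DependsOn (∫⋯∫⁻_s, f ∂μ) (A \ s) := fun x y hxy => by
  simp only [MeasureTheory.lmarginal]
  congr 1 with z
  exact hf.updateFinset z hxy

variable [∀ j, IsProbabilityMeasure (μ j)] {ι : Type*} [Fintype ι]

theorem lmarginal_prod_sqrt_le (A : ι → Finset δ) (hA : ∀ j, #{i | j ∈ A i} ≤ 2)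
    {F : ι → (∀ j, X j) → ℝ≥0∞} (hF : ∀ i, Measurable (F i))
    (hdep : ∀ i, DependsOn (F i) (A i)) (s : Finset δ) :
    ∫⋯∫⁻_s, (fun x => ∏ i, F i x ^ (1 / 2 : ℝ)) ∂μ
      ≤ fun x => ∏ i, (∫⋯∫⁻_s, F i ∂μ) x ^ (1 / 2 : ℝ) := by
  have hprod : Measurable fun x => ∏ i, F i x ^ (1 / 2 : ℝ) :=
    Finset.measurable_prod _ fun i _ => (hF i).pow_const _
  induction s using Finset.induction with
  | empty => simp
  | insert k s hk ih =>
    intro x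
    -- only the (at most two) `F i` with `k ∈ A i` see the coordinate `k`
    have hconst : ∀ i ∉ ({i | k ∈ A i} : Finset ι), ∀ t,
        (∫⋯∫⁻_s, F i ∂μ) (update x k t) = (∫⋯∫⁻_s, F i ∂μ) x := fun i hi t =>
      (hdep i).lmarginal s fun j hj => update_of_ne (by grind) _ _
    calc (∫⋯∫⁻_insert k s, (fun x => ∏ i, F i x ^ (1 / 2 : ℝ)) ∂μ) x
        = ∫⁻ t, (∫⋯∫⁻_s, (fun x => ∏ i, F i x ^ (1 / 2 : ℝ)) ∂μ) (update x k t) ∂μ k :=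
          lmarginal_insert _ hprod hk x
      _ ≤ ∫⁻ t, ∏ i, (∫⋯∫⁻_s, F i ∂μ) (update x k t) ^ (1 / 2 : ℝ) ∂μ k :=
          lintegral_mono fun t => ih _
      _ ≤ ∏ i, (∫⁻ t, (∫⋯∫⁻_s, F i ∂μ) (update x k t) ∂μ k) ^ (1 / 2 : ℝ) :=
          lintegral_prod_sqrt_le_of_card_le_two _ (hA k)
            (fun i _ => ((hF i).lmarginal μ).comp (measurable_update x) |>.aemeasurable) _ hconst
      _ = ∏ i, (∫⋯∫⁻_insert k s, F i ∂μ) x ^ (1 / 2 : ℝ) := by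
          simp_rw [lmarginal_insert _ (hF _) hk]

theorem lintegral_prod_sqrt_le [Fintype δ] (A : ι → Finset δ) (hA : ∀ j, #{i | j ∈ A i} ≤ 2)
    {F : ι → (∀ j, X j) → ℝ≥0∞} (hF : ∀ i, Measurable (F i))
    (hdep : ∀ i, DependsOn (F i) (A i)) :
    ∫⁻ x, ∏ i, F i x ^ (1 / 2 : ℝ) ∂Measure.pi μ
      ≤ ∏ i, (∫⁻ x, F i x ∂Measure.pi μ) ^ (1 / 2 : ℝ) := by
  have := fun j => nonempty_of_isProbabilityMeasure (μ j)
  simpa using lmarginal_prod_sqrt_le (μ := μ) A hA hF hdep univ (Classical.arbitrary _)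

end Marginal

theorem stmt_19_general {n m : ℕ} {Ω : Fin n → Type*} [∀ j, MeasurableSpace (Ω j)]
    (μ : ∀ j, Measure (Ω j)) [∀ j, IsProbabilityMeasure (μ j)]
    (A : Fin m → Finset (Fin n))
    (hA2 : ∀ j : Fin n, (Finset.univ.filter (fun i => j ∈ A i)).card ≤ 2)
    (f : Fin m → ((∀ j, Ω j) → ℝ))
    (hf : ∀ i, Measurable (f i))
    (hdep : ∀ i, ∀ ω ω' : (∀ j, Ω j), (∀ j ∈ A i, ω j = ω' j) → f i ω = f i ω')
    (hsq : ∀ i, Integrable (fun ω => (f i ω) ^ 2) (Measure.pi μ)) :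
    ∫ ω, ∏ i, |f i ω| ∂(Measure.pi μ)
      ≤ ∏ i, Real.sqrt (∫ ω, (f i ω) ^ 2 ∂(Measure.pi μ)) := by
  have hsqrt : ∀ x : ℝ, ENNReal.ofReal (x ^ 2) ^ (1 / 2 : ℝ) = ENNReal.ofReal |x| := fun x => by
    rw [ENNReal.ofReal_rpow_of_nonneg (sq_nonneg x) (by norm_num), ← Real.sqrt_eq_rpow,
      Real.sqrt_sq_eq_abs]
  have key := lintegral_prod_sqrt_le (μ := μ) A hA2 (fun i => ((hf i).pow_const 2).ennreal_ofReal)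
    fun i ω ω' h => by simp only [hdep i ω ω' h]
  simp only [hsqrt] at key
  rw [integral_eq_lintegral_of_nonneg_ae (.of_forall fun ω => by positivity)
    (Finset.measurable_prod _ fun i _ => (hf i).abs).aestronglyMeasurable]
  simp only [ENNReal.ofReal_prod_of_nonneg fun i _ => abs_nonneg _, Real.sqrt_eq_rpow,
    integral_eq_lintegral_of_nonneg_ae (.of_forall fun ω => sq_nonneg _)
      ((hf _).pow_const 2).aestronglyMeasurable, ENNReal.toReal_rpow, ← ENNReal.toReal_prod]
  exact ENNReal.toReal_mono (ENNReal.prod_ne_top fun i _ =>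
    ENNReal.rpow_ne_top_of_nonneg (by norm_num) (hsq i).lintegral_lt_top.ne) key

/-- the generalized Hölder inequality with all exponents equal to 2.
If each coordinate j ∈ [n] belongs to at most two of the index sets A_i, and each
f_i is a square-integrable function depending only on the coordinates in A_i, then
∫ Π |f_i| dμ ≤ Π (∫ f_i² dμ_{A_i})^{1/2}. -/
theorem stmt_19 {n m : ℕ} {Ω : Fin n → Type*} [∀ j, MeasurableSpace (Ω j)]
    (μ : ∀ j, Measure (Ω j)) [∀ j, IsProbabilityMeasure (μ j)]
    (A : Fin m → Finset (Fin n)) (hA : ∀ i, (A i).Nonempty)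
    (hA2 : ∀ j : Fin n, (Finset.univ.filter (fun i => j ∈ A i)).card ≤ 2)
    (f : Fin m → ((∀ j, Ω j) → ℝ))
    (hf : ∀ i, Measurable (f i))
    (hdep : ∀ i, ∀ ω ω' : (∀ j, Ω j), (∀ j ∈ A i, ω j = ω' j) → f i ω = f i ω')
    (hsq : ∀ i, Integrable (fun ω => (f i ω) ^ 2) (Measure.pi μ)) :
    ∫ ω, ∏ i, |f i ω| ∂(Measure.pi μ)
      ≤ ∏ i, Real.sqrt (∫ ω, (f i ω) ^ 2 ∂(Measure.pi μ)) :=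
  stmt_19_general μ A hA2 f hf hdep hsq
end
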